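/- arXiv:0904.0471 — 4 statements merged into one kernel-verified Lean document; each statement's English description precedes it below -/
import Mathlib

section
/- Let S = {(e_1,e_1'), …, (e_k,e_k')} be a perfect pairing of the ordered set {1,…,2k} with e_r < e_r' for each r. Let σ(S) be the permutation of {1,…,2k} sending (1,2,3,4,…,2k-1,2k) to (e_1, e_1', e_2, e_2', …, e_k, e_k'). Then sgn(σ(S)) = (-1)^{cr(S)}. -/
open Matrix Finset

variable {R : Type*} [CommRing R]

/-- The position `2r` in `Fin (2k)`. -/
def evenPos (k : ℕ) (r : Fin k) : Fin (2 * k) :=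
  ⟨2 * r.1, by have := r.2; omega⟩

/-- The position `2r + 1` in `Fin (2k)`. -/
def oddPos (k : ℕ) (r : Fin k) : Fin (2 * k) :=
  ⟨2 * r.1 + 1, by have := r.2; omega⟩

/-- A permutation of `Fin (2k)` is canonical if `σ(2r) < σ(2r+1)` for all `r` and
`σ(0) < σ(2) < ⋯ < σ(2k-2)`. -/
def IsCanonical {k : ℕ} (σ : Equiv.Perm (Fin (2 * k))) : Prop :=
  (∀ r : Fin k, σ (evenPos k r) < σ (oddPos k r)) ∧
  (∀ r s : Fin k, r < s → σ (evenPos k r) < σ (evenPos k s))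

instance {k : ℕ} : DecidablePred (IsCanonical (k := k)) := fun σ => by
  unfold IsCanonical; infer_instance

/-- The Pfaffian of a `2k × 2k` matrix, defined as the sum over canonical permutations `σ`
of `sgn(σ) ∏ z_{σ(2r), σ(2r+1)}`. -/
def pfaffianAux (k : ℕ) (z : Matrix (Fin (2 * k)) (Fin (2 * k)) R) : R :=
  ∑ σ ∈ Finset.univ.filter (fun σ : Equiv.Perm (Fin (2 * k)) => IsCanonical σ),
    ((Equiv.Perm.sign σ : ℤ) : R) * ∏ r : Fin k, z (σ (evenPos k r)) (σ (oddPos k r))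

/-- The Pfaffian of an `n × n` matrix: `0` if `n` is odd. -/
def pfaffian {n : ℕ} (z : Matrix (Fin n) (Fin n) R) : R :=
  if h : Even n then
    pfaffianAux (n / 2) (Matrix.of fun a b =>
      z (Fin.cast (by obtain ⟨m, hm⟩ := h; omega) a)
        (Fin.cast (by obtain ⟨m, hm⟩ := h; omega) b))
  else 0

/-- The sub-Pfaffian `Pfaff_I(z)`: the Pfaffian of the submatrix of `z` with rows and
columns in `I` (listed in increasing order). -/
def subPfaff {n : ℕ} (z : Matrix (Fin n) (Fin n) R) (I : Finset (Fin n)) : R :=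
  pfaffian (Matrix.of fun a b : Fin I.card =>
    z ((I.orderIsoOfFin rfl) a : Fin n) ((I.orderIsoOfFin rfl) b : Fin n))

/-- A perfect pairing of `Fin n`, encoded as a fixed-point-free involution. -/
def IsPairing {n : ℕ} (f : Fin n → Fin n) : Prop :=
  (∀ i, f (f i) = i) ∧ ∀ i, f i ≠ i

instance {n : ℕ} : DecidablePred (IsPairing (n := n)) := fun f => by
  unfold IsPairing; infer_instance

/-- The crossing number of a pairing: the number of pairs of pairs `(a, f a)`, `(b, f b)`
with `a < b < f a < f b`. -/
def crossings {n : ℕ} (f : Fin n → Fin n) : ℕ :=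
  (Finset.univ.filter (fun p : Fin n × Fin n => p.1 < p.2 ∧ p.2 < f p.1 ∧ f p.1 < f p.2)).card

/-- The monomial `z_S = ∏_{(e,e') ∈ S, e < e'} z_{e,e'}` associated to a pairing. -/
def pairingTerm {n : ℕ} (z : Matrix (Fin n) (Fin n) R) (f : Fin n → Fin n) : R :=
  ∏ i ∈ Finset.univ.filter (fun i => i < f i), z i (f i)



section Aux

private lemma mySign_eq_signAux {n : ℕ} (f : Equiv.Perm (Fin n)) :
    Equiv.Perm.sign f = Equiv.Perm.signAux f := by
  refine Equiv.Perm.swap_induction_on f ?_ ?_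
  · simp [Equiv.Perm.signAux_one]
  · intro g x y hxy ih
    rw [Equiv.Perm.sign_mul, Equiv.Perm.signAux_mul, Equiv.Perm.sign_swap hxy,
      Equiv.Perm.signAux_swap hxy, ih]

private lemma myPowCongr {a b : ℕ} (h : a % 2 = b % 2) : ((-1 : ℤˣ)) ^ a = (-1) ^ b := by
  conv_lhs => rw [← Nat.div_add_mod a 2]
  conv_rhs => rw [← Nat.div_add_mod b 2]
  rw [pow_add, pow_add, pow_mul, pow_mul, h]
  norm_num

/-- The interleaving equivalence. -/
private def myEqv (k : ℕ) : (Fin k ⊕ Fin k) ≃ Fin (2 * k) where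
  toFun := Sum.elim (evenPos k) (oddPos k)
  invFun i := if i.1 % 2 = 0 then Sum.inl ⟨i.1 / 2, by have := i.2; omega⟩
    else Sum.inr ⟨i.1 / 2, by have := i.2; omega⟩
  left_inv := by
    rintro (r | r) <;>
      simp only [Sum.elim_inl, Sum.elim_inr, evenPos, oddPos] <;>
      split_ifs with h <;>
      (try simp_all [Fin.ext_iff]) <;> omega
  right_inv := by
    intro i
    dsimp only
    split_ifs with h <;> (try simp_all [evenPos, oddPos, Fin.ext_iff]) <;> omega

private lemma mySumSplit {M : Type*} [AddCommMonoid M] (k : ℕ) (g : Fin (2 * k) → M) :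
    ∑ i, g i = ∑ r : Fin k, g (evenPos k r) + ∑ r : Fin k, g (oddPos k r) := by
  rw [← Equiv.sum_comp (myEqv k) g, Fintype.sum_sum_type]
  rfl

end Aux

/-- If `S = {(e_1, e_1'), …, (e_k, e_k')}` is a perfect pairing of
`{1, …, 2k}` with `e_r < e_r'`, and `σ(S)` is the permutation sending
`(1, 2, …, 2k-1, 2k)` to `(e_1, e_1', …, e_k, e_k')`, then `sgn(σ(S)) = (-1)^{cr(S)}`. -/
theorem sign_pairing_perm_eq_crossings (k : ℕ) (e e' : Fin k → Fin (2 * k))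
    (hlt : ∀ r, e r < e' r)
    (σ : Equiv.Perm (Fin (2 * k)))
    (hσe : ∀ r : Fin k, σ (evenPos k r) = e r)
    (hσo : ∀ r : Fin k, σ (oddPos k r) = e' r) :
    Equiv.Perm.sign σ =
      (-1) ^ (Finset.univ.filter (fun p : Fin k × Fin k =>
        e p.1 < e p.2 ∧ e p.2 < e' p.1 ∧ e' p.1 < e' p.2)).card := by
  classical
  rw [mySign_eq_signAux]
  have hS : Equiv.Perm.finPairsLT (2 * k) =
      Finset.univ.filter (fun x : (Σ _ : Fin (2 * k), Fin (2 * k)) => x.2 < x.1) := by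
    ext x
    simp [Equiv.Perm.mem_finPairsLT]
  unfold Equiv.Perm.signAux
  rw [hS, Finset.prod_ite _ _, Finset.prod_const, Finset.prod_const, one_pow, mul_one,
    Finset.filter_filter]
  apply myPowCongr
  have key : ((Finset.univ.filter (fun x : (Σ _ : Fin (2 * k), Fin (2 * k)) =>
        x.2 < x.1 ∧ σ x.1 ≤ σ x.2)).card : ZMod 2) =
      ((Finset.univ.filter (fun p : Fin k × Fin k =>
        e p.1 < e p.2 ∧ e p.2 < e' p.1 ∧ e' p.1 < e' p.2)).card : ZMod 2) := by
    have hL : ((Finset.univ.filter (fun x : (Σ _ : Fin (2 * k), Fin (2 * k)) =>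
          x.2 < x.1 ∧ σ x.1 ≤ σ x.2)).card : ZMod 2) =
        ∑ i : Fin (2 * k), ∑ j : Fin (2 * k),
          (if j < i ∧ σ i ≤ σ j then (1 : ZMod 2) else 0) := by
      rw [Finset.card_filter, Nat.cast_sum, ← Finset.univ_sigma_univ, Finset.sum_sigma]
      simp
    have hR : ((Finset.univ.filter (fun p : Fin k × Fin k =>
          e p.1 < e p.2 ∧ e p.2 < e' p.1 ∧ e' p.1 < e' p.2)).card : ZMod 2) =
        ∑ r : Fin k, ∑ s : Fin k,
          (if e r < e s ∧ e s < e' r ∧ e' r < e' s then (1 : ZMod 2) else 0) := by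
      rw [Finset.card_filter, Nat.cast_sum, Fintype.sum_prod_type]
      simp
    rw [hL, hR]
    -- distinctness facts
    have hne : ∀ i j : Fin (2 * k), i ≠ j → σ i ≠ σ j :=
      fun i j h hc => h (σ.injective hc)
    have d2 : ∀ r s : Fin k, (e r).1 ≠ (e' s).1 := by
      intro r s
      have : σ (evenPos k r) ≠ σ (oddPos k s) := by
        apply hne
        simp only [Ne, Fin.ext_iff, evenPos, oddPos]
        omega
      rw [hσe, hσo] at this
      exact Fin.val_ne_of_ne this
    have d1 : ∀ r s : Fin k, r ≠ s → (e r).1 ≠ (e s).1 := by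
      intro r s hrs
      have : σ (evenPos k r) ≠ σ (evenPos k s) := by
        apply hne
        have := Fin.val_ne_of_ne hrs
        simp only [Ne, Fin.ext_iff, evenPos]
        omega
      rw [hσe, hσe] at this
      exact Fin.val_ne_of_ne this
    have d4 : ∀ r s : Fin k, r ≠ s → (e' r).1 ≠ (e' s).1 := by
      intro r s hrs
      have : σ (oddPos k r) ≠ σ (oddPos k s) := by
        apply hne
        have := Fin.val_ne_of_ne hrs
        simp only [Ne, Fin.ext_iff, oddPos]
        omega
      rw [hσo, hσo] at this
      exact Fin.val_ne_of_ne this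
    have hlt' : ∀ r : Fin k, (e r).1 < (e' r).1 := fun r => hlt r
    calc
      ∑ i : Fin (2 * k), ∑ j : Fin (2 * k),
          (if j < i ∧ σ i ≤ σ j then (1 : ZMod 2) else 0)
          = ∑ r : Fin k, ∑ s : Fin k,
            ((if evenPos k s < evenPos k r ∧ e r ≤ e s then (1 : ZMod 2) else 0) +
             (if oddPos k s < evenPos k r ∧ e r ≤ e' s then (1 : ZMod 2) else 0) +
             ((if evenPos k s < oddPos k r ∧ e' r ≤ e s then (1 : ZMod 2) else 0) +
              (if oddPos k s < oddPos k r ∧ e' r ≤ e' s then (1 : ZMod 2) else 0))) := by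
        simp only [mySumSplit, hσe, hσo, ← Finset.sum_add_distrib]
      _ = ∑ r : Fin k, ∑ s : Fin k,
            ((if s < r ∧ e s < e r ∧ e r < e' s ∧ e' s < e' r then (1 : ZMod 2) else 0) +
             (if s < r ∧ e r < e s ∧ e s < e' r ∧ e' r < e' s then (1 : ZMod 2) else 0)) := by
        refine Finset.sum_congr rfl fun r _ => Finset.sum_congr rfl fun s _ => ?_
        rcases eq_or_ne r s with rfl | hrs
        · have h1 := hlt' r
          have h2 := d2 r r
          simp only [Fin.lt_def, Fin.le_def, evenPos, oddPos]
          split_ifs <;> first | rfl | omega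
        · have h1 := hlt' r
          have h2 := hlt' s
          have h3 := d1 r s hrs
          have h4 := d2 r s
          have h5 := d2 s r
          have h6 := d4 r s hrs
          have h7 := Fin.val_ne_of_ne hrs
          simp only [Fin.lt_def, Fin.le_def, evenPos, oddPos]
          split_ifs <;> first | rfl | decide | omega
      _ = (∑ r : Fin k, ∑ s : Fin k,
            (if s < r ∧ e s < e r ∧ e r < e' s ∧ e' s < e' r then (1 : ZMod 2) else 0)) +
          ∑ r : Fin k, ∑ s : Fin k,
            (if s < r ∧ e r < e s ∧ e s < e' r ∧ e' r < e' s then (1 : ZMod 2) else 0) := by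
        simp only [Finset.sum_add_distrib]
      _ = (∑ r : Fin k, ∑ s : Fin k,
            (if r < s ∧ e r < e s ∧ e s < e' r ∧ e' r < e' s then (1 : ZMod 2) else 0)) +
          ∑ r : Fin k, ∑ s : Fin k,
            (if s < r ∧ e r < e s ∧ e s < e' r ∧ e' r < e' s then (1 : ZMod 2) else 0) := by
        rw [Finset.sum_comm]
      _ = ∑ r : Fin k, ∑ s : Fin k,
            (if e r < e s ∧ e s < e' r ∧ e' r < e' s then (1 : ZMod 2) else 0) := by
        simp only [← Finset.sum_add_distrib]
        refine Finset.sum_congr rfl fun r _ => Finset.sum_congr rfl fun s _ => ?_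
        rcases eq_or_ne r s with rfl | hrs
        · simp only [Fin.lt_def]
          split_ifs <;> first | rfl | omega
        · have h7 := Fin.val_ne_of_ne hrs
          simp only [Fin.lt_def]
          split_ifs <;> first | rfl | decide | omega
  have := (ZMod.natCast_eq_natCast_iff _ _ _).mp key
  exact this
end

section
/- Let n be even and let z and y be skew-symmetric n × n matrices over a commutative ring. Then Pfaff(z + y) = Σ_{I ⊆ {1,…,n}, |I| even} sgn(I) · Pfaff_I(z) · Pfaff_{I^C}(y), where I^C = {1,…,n} \ I. -/
open Matrix Finset

variable {R : Type*} [CommRing R]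

open Equiv Function

/-! ### generic helpers -/

theorem neg_one_pow_congr' {M : Type*} [Monoid M] [HasDistribNeg M] {a b : ℕ}
    (h : a % 2 = b % 2) : (-1 : M) ^ a = (-1) ^ b := by
  rw [← Nat.div_add_mod a 2, ← Nat.div_add_mod b 2, pow_add, pow_add,
    pow_mul, pow_mul, neg_one_sq, one_pow, one_pow, h]

theorem ordEmb_congr {α : Type*} [LinearOrder α] {s t : Finset α} (h : s = t)
    {i : Fin s.card} {j : Fin t.card} (hij : i.1 = j.1) :
    s.orderEmbOfFin rfl i = t.orderEmbOfFin rfl j := by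
  subst h; congr 1; exact Fin.ext hij

/-! ### shiftSet -/

def shiftSet {m : ℕ} (E : Finset (Fin (m+1))) : Finset (Fin m) :=
  univ.filter (fun j => j.succ ∈ E)

lemma mem_shiftSet {m : ℕ} {E : Finset (Fin (m+1))} {j : Fin m} :
    j ∈ shiftSet E ↔ j.succ ∈ E := by simp [shiftSet]

lemma shiftSet_compl {m : ℕ} (E : Finset (Fin (m+1))) :
    shiftSet Eᶜ = (shiftSet E)ᶜ := by
  ext j; simp [mem_shiftSet]

lemma image_succ_shiftSet {m : ℕ} (E : Finset (Fin (m+1))) :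
    (shiftSet E).image Fin.succ = E.erase 0 := by
  ext x
  simp only [mem_image, mem_shiftSet, mem_erase]
  constructor
  · rintro ⟨j, hj, rfl⟩; exact ⟨Fin.succ_ne_zero j, hj⟩
  · rintro ⟨hx0, hx⟩
    refine ⟨x.pred hx0, ?_, Fin.succ_pred _ _⟩
    rwa [Fin.succ_pred]

lemma card_shiftSet {m : ℕ} (E : Finset (Fin (m+1))) :
    (shiftSet E).card = if 0 ∈ E then E.card - 1 else E.card := by
  have h1 : (shiftSet E).card = (E.erase 0).card := by
    rw [← image_succ_shiftSet, card_image_of_injective _ (Fin.succ_injective m)]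
  rw [h1]
  split_ifs with h
  · rw [card_erase_of_mem h]
  · rw [erase_eq_of_notMem h]

lemma sum_shiftSet {m : ℕ} (E : Finset (Fin (m+1))) :
    ∑ i ∈ E, i.1 = (∑ j ∈ shiftSet E, j.1) + (shiftSet E).card := by
  have h0 : ∑ i ∈ E, i.1 = ∑ i ∈ E.erase 0, i.1 := by
    by_cases h : 0 ∈ E
    · exact (Finset.sum_erase _ (by simp)).symm
    · rw [erase_eq_of_notMem h]
  rw [h0, ← image_succ_shiftSet, Finset.sum_image
    (fun a _ b _ h => Fin.succ_injective m h)]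
  simp [Fin.val_succ, Finset.sum_add_distrib]

/-! ### the riffle permutation of a finset -/

lemma wAux {m : ℕ} (E : Finset (Fin m)) {j : Fin m} (h : ¬ j.1 < E.card) :
    j.1 - E.card < Eᶜ.card := by
  have h1 := E.card_add_card_compl
  have h2 := j.2
  simp only [Fintype.card_fin] at h1
  omega

def wFun {m : ℕ} (E : Finset (Fin m)) : Fin m → Fin m := fun j =>
  if h : j.1 < E.card then E.orderEmbOfFin rfl ⟨j.1, h⟩
  else Eᶜ.orderEmbOfFin rfl ⟨j.1 - E.card, wAux E h⟩

lemma wFun_inj {m : ℕ} (E : Finset (Fin m)) : Injective (wFun E) := by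
  intro i j hij
  unfold wFun at hij
  split_ifs at hij with hi hj hj
  · have := (E.orderEmbOfFin rfl).injective hij
    exact Fin.ext (congrArg Fin.val this : _)
  · exfalso
    have h1 : E.orderEmbOfFin rfl ⟨i.1, hi⟩ ∈ E := Finset.orderEmbOfFin_mem _ _ _
    have h2 : Eᶜ.orderEmbOfFin rfl ⟨j.1 - E.card, wAux E hj⟩ ∈ Eᶜ :=
      Finset.orderEmbOfFin_mem _ _ _
    rw [hij] at h1; rw [Finset.mem_compl] at h2; exact h2 h1
  · exfalso
    have h1 : E.orderEmbOfFin rfl ⟨j.1, hj⟩ ∈ E := Finset.orderEmbOfFin_mem _ _ _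
    have h2 : Eᶜ.orderEmbOfFin rfl ⟨i.1 - E.card, wAux E hi⟩ ∈ Eᶜ :=
      Finset.orderEmbOfFin_mem _ _ _
    rw [hij] at h2; rw [Finset.mem_compl] at h2; exact h2 h1
  · have := (Eᶜ.orderEmbOfFin rfl).injective hij
    have := (congrArg Fin.val this : _)
    simp only at this
    exact Fin.ext (by omega)

noncomputable def wPerm {m : ℕ} (E : Finset (Fin m)) : Equiv.Perm (Fin m) :=
  Equiv.ofBijective _ (Finite.injective_iff_bijective.mp (wFun_inj E))

lemma wPerm_apply {m : ℕ} (E : Finset (Fin m)) (j : Fin m) :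
    wPerm E j = wFun E j := rfl


/-! ### arithmetic helpers -/

lemma nat_tri1 (c : ℕ) : 2 * (c * (c - 1) / 2) = c * (c - 1) := by
  rcases c with _ | d
  · simp
  · simp only [Nat.add_sub_cancel]
    refine Nat.mul_div_cancel' ?_
    have := Nat.even_mul_succ_self d
    rw [mul_comm] at this
    exact this.two_dvd

lemma nat_tri2 (c : ℕ) : (c + 1) * c = c * (c - 1) + 2 * c := by
  rcases c with _ | d
  · simp
  · simp only [Nat.add_sub_cancel]; ring

/-! ### orderEmbOfFin of shifted sets -/

lemma orderEmb_succ_of_not_mem {m : ℕ} {E : Finset (Fin (m+1))} (h0 : 0 ∉ E)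
    (j : Fin E.card) (j' : Fin (shiftSet E).card) (hjj : j.1 = j'.1) :
    E.orderEmbOfFin rfl j = ((shiftSet E).orderEmbOfFin rfl j').succ := by
  have hc : E.card = (shiftSet E).card := by
    rw [card_shiftSet, if_neg h0]
  have key : (fun i : Fin E.card =>
      (((shiftSet E).orderEmbOfFin rfl) (Fin.cast hc i)).succ) = E.orderEmbOfFin rfl := by
    apply Finset.orderEmbOfFin_unique
    · intro x
      have := Finset.orderEmbOfFin_mem (shiftSet E) rfl (Fin.cast hc x)
      exact mem_shiftSet.mp this
    · intro x y hxy
      exact Fin.succ_lt_succ_iff.mpr (((shiftSet E).orderEmbOfFin rfl).strictMono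
        (show Fin.cast hc x < Fin.cast hc y from hxy))
  rw [← key]
  dsimp only
  have hcast : Fin.cast hc j = j' := Fin.ext (by simpa using hjj)
  rw [hcast]

lemma orderEmb_zero_of_mem {m : ℕ} {E : Finset (Fin (m+1))} (h0 : 0 ∈ E)
    (j : Fin E.card) (hj : j.1 = 0) : E.orderEmbOfFin rfl j = 0 := by
  have hpos : 0 < E.card := Finset.card_pos.mpr ⟨0, h0⟩
  have : j = ⟨0, hpos⟩ := Fin.ext hj
  subst this
  rw [Finset.orderEmbOfFin_zero rfl hpos]
  exact le_antisymm (Finset.min'_le _ _ h0) (Fin.zero_le _)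

lemma orderEmb_succ_of_mem {m : ℕ} {E : Finset (Fin (m+1))} (h0 : 0 ∈ E)
    (j : Fin E.card) (hj : j.1 ≠ 0) (j' : Fin (shiftSet E).card) (hjj : j'.1 = j.1 - 1) :
    E.orderEmbOfFin rfl j = ((shiftSet E).orderEmbOfFin rfl j').succ := by
  have hc : (shiftSet E).card = E.card - 1 := by rw [card_shiftSet, if_pos h0]
  have key : (fun i : Fin E.card => if hi : i.1 = 0 then (0 : Fin (m+1)) else
      (((shiftSet E).orderEmbOfFin rfl) ⟨i.1 - 1, by omega⟩).succ) = E.orderEmbOfFin rfl := by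
    apply Finset.orderEmbOfFin_unique
    · intro x
      split_ifs with hx
      · exact h0
      · exact mem_shiftSet.mp (Finset.orderEmbOfFin_mem _ _ _)
    · intro x y hxy
      dsimp only
      have hxy' : x.1 < y.1 := hxy
      split_ifs with hx hy hy
      · omega
      · exact Fin.succ_pos _
      · omega
      · refine Fin.succ_lt_succ_iff.mpr (((shiftSet E).orderEmbOfFin rfl).strictMono ?_)
        simp only [Fin.mk_lt_mk]
        omega
  rw [← key]
  dsimp only
  rw [dif_neg hj]
  exact congrArg Fin.succ (congrArg _ (Fin.ext (show j.1 - 1 = j'.1 by omega)))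

/-! ### sign of the riffle permutation -/

theorem sign_wPerm {m : ℕ} (E : Finset (Fin m)) :
    Equiv.Perm.sign (wPerm E) = (-1) ^ (∑ i ∈ E, i.1 + E.card * (E.card - 1) / 2) := by
  induction m with
  | zero =>
      have hE : E = ∅ := Finset.eq_empty_of_isEmpty E
      subst hE
      have : wPerm (∅ : Finset (Fin 0)) = 1 := Subsingleton.elim _ _
      simp [this]
  | succ m ih =>
      have hsum := sum_shiftSet E
      by_cases h0 : 0 ∈ E
      · -- `wPerm E` fixes `0` and acts as `wPerm (shiftSet E)` on successors
        have hc : (shiftSet E).card = E.card - 1 := by rw [card_shiftSet, if_pos h0]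
        have hcpos : 0 < E.card := Finset.card_pos.mpr ⟨0, h0⟩
        have hdec : wPerm E = Equiv.Perm.decomposeFin.symm (0, wPerm (shiftSet E)) := by
          apply Equiv.ext
          intro j
          induction j using Fin.cases with
          | zero =>
              rw [Equiv.Perm.decomposeFin_symm_apply_zero, wPerm_apply, wFun]
              have hpos : (0 : Fin (m+1)).1 < E.card := hcpos
              rw [dif_pos hpos]
              exact orderEmb_zero_of_mem h0 _ rfl
          | succ x =>
              rw [Equiv.Perm.decomposeFin_symm_apply_succ, Equiv.swap_self,
                Equiv.refl_apply, wPerm_apply, wPerm_apply, wFun, wFun]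
              by_cases hx : (x.succ : Fin (m+1)).1 < E.card
              · have hx' : x.1 < (shiftSet E).card := by
                  simp only [Fin.val_succ] at hx; omega
                rw [dif_pos hx, dif_pos hx']
                refine orderEmb_succ_of_mem h0 _ ?_ _ ?_ <;> simp [Fin.val_succ]
              · have hx' : ¬ x.1 < (shiftSet E).card := by
                  simp only [Fin.val_succ] at hx; omega
                rw [dif_neg hx, dif_neg hx']
                have hcompl0 : (0 : Fin (m+1)) ∉ Eᶜ := by simp [h0]
                have hcc : (shiftSet Eᶜ).card = Eᶜ.card := by
                  rw [card_shiftSet, if_neg hcompl0]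
                have hidx : (x.succ : Fin (m+1)).1 - E.card < (shiftSet Eᶜ).card := by
                  rw [hcc]; exact wAux E hx
                rw [orderEmb_succ_of_not_mem hcompl0 ⟨(x.succ : Fin (m+1)).1 - E.card, wAux E hx⟩
                  ⟨(x.succ : Fin (m+1)).1 - E.card, hidx⟩ rfl]
                congr 1
                refine ordEmb_congr (shiftSet_compl E) ?_
                simp only [Fin.val_succ] at hx ⊢
                omega
        rw [hdec, Equiv.Perm.decomposeFin.symm_sign, if_pos rfl, one_mul, ih]
        apply neg_one_pow_congr'
        have h1 := nat_tri1 ((shiftSet E).card + 1)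
        have h2 := nat_tri1 (shiftSet E).card
        have h3 := nat_tri2 (shiftSet E).card
        simp only [Nat.add_sub_cancel] at h1
        have h4 : E.card = (shiftSet E).card + 1 := by omega
        rw [h4]
        simp only [Nat.add_sub_cancel]
        omega
      · -- `0 ∉ E` : compose with a cycle
        have hc : (shiftSet E).card = E.card := by rw [card_shiftSet, if_neg h0]
        have hlt : E.card < m + 1 := by
          have h1 := E.card_add_card_compl
          simp only [Fintype.card_fin] at h1
          have : 0 < Eᶜ.card := Finset.card_pos.mpr ⟨0, Finset.mem_compl.mpr h0⟩
          omega
        have hdec : wPerm E = Equiv.Perm.decomposeFin.symm (0, wPerm (shiftSet E)) *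
            Fin.cycleRange ⟨E.card, hlt⟩ := by
          apply Equiv.ext
          intro j
          rw [Equiv.Perm.mul_apply]
          rcases lt_trichotomy j.1 E.card with hj | hj | hj
          · have hjlt : j < (⟨E.card, hlt⟩ : Fin (m+1)) := hj
            rw [Fin.cycleRange_of_lt hjlt]
            have hjlast : j < Fin.last m := by
              rw [Fin.lt_def]; simp only [Fin.val_last]; omega
            have hj1 : (j + 1).1 = j.1 + 1 := Fin.val_add_one_of_lt hjlast
            have hjsucc : j + 1 = Fin.succ ⟨j.1, by omega⟩ := by
              have hv : (Fin.succ (⟨j.1, by omega⟩ : Fin m)).1 = j.1 + 1 := rfl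
              exact Fin.ext (hj1.trans hv.symm)
            rw [hjsucc, Equiv.Perm.decomposeFin_symm_apply_succ, Equiv.swap_self,
              Equiv.refl_apply, wPerm_apply, wPerm_apply, wFun, wFun]
            rw [dif_pos hj, dif_pos (show j.1 < (shiftSet E).card by omega)]
            exact orderEmb_succ_of_not_mem h0 _ _ rfl
          · have hje : j = (⟨E.card, hlt⟩ : Fin (m+1)) := Fin.ext hj
            rw [hje, Fin.cycleRange_self, Equiv.Perm.decomposeFin_symm_apply_zero,
              wPerm_apply, wFun]
            rw [dif_neg (by omega)]
            refine orderEmb_zero_of_mem (Finset.mem_compl.mpr h0) _ ?_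
            show E.card - E.card = 0
            omega
          · have hjgt : (⟨E.card, hlt⟩ : Fin (m+1)) < j := hj
            rw [Fin.cycleRange_of_gt hjgt]
            have hjsucc : j = Fin.succ ⟨j.1 - 1, by have := j.2; omega⟩ := by
              apply Fin.ext
              have hv : (Fin.succ (⟨j.1 - 1, by have := j.2; omega⟩ : Fin m)).1 = j.1 - 1 + 1 :=
                rfl
              rw [hv]; omega
            conv_rhs => rw [hjsucc]
            rw [Equiv.Perm.decomposeFin_symm_apply_succ, Equiv.swap_self,
              Equiv.refl_apply, wPerm_apply, wPerm_apply, wFun, wFun]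
            rw [dif_neg (by omega), dif_neg (show ¬ j.1 - 1 < (shiftSet E).card by omega)]
            have hcompl0 : (0 : Fin (m+1)) ∈ Eᶜ := Finset.mem_compl.mpr h0
            have hcc : (shiftSet Eᶜ).card = Eᶜ.card - 1 := by
              rw [card_shiftSet, if_pos hcompl0]
            have hcsum := E.card_add_card_compl
            simp only [Fintype.card_fin] at hcsum
            have hidx : j.1 - E.card - 1 < (shiftSet Eᶜ).card := by
              have := j.2; omega
            rw [orderEmb_succ_of_mem hcompl0 ⟨j.1 - E.card, wAux E (by omega)⟩
              (show j.1 - E.card ≠ 0 by omega) ⟨j.1 - E.card - 1, hidx⟩ rfl]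
            congr 1
            refine ordEmb_congr (shiftSet_compl E) ?_
            simp only
            omega
        rw [hdec, Equiv.Perm.sign_mul, Equiv.Perm.decomposeFin.symm_sign, if_pos rfl, one_mul,
          Fin.sign_cycleRange, ih]
        rw [← pow_add]
        apply neg_one_pow_congr'
        have hval : ((⟨E.card, hlt⟩ : Fin (m+1)) : ℕ) = E.card := rfl
        rw [hc] at hsum
        rw [hval, hc]
        omega

/-! ### pair-position helpers -/

def halfIdx {k : ℕ} (i : Fin (2*k)) : Fin k := ⟨i.1 / 2, by have := i.2; omega⟩

def flip2 {k : ℕ} (i : Fin (2*k)) : Fin (2*k) :=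
  ⟨2*(i.1/2) + (1 - i.1 % 2), by have := i.2; omega⟩

lemma halfIdx_evenPos {k : ℕ} (r : Fin k) : halfIdx (evenPos k r) = r :=
  Fin.ext (show (2*r.1)/2 = r.1 by omega)

lemma halfIdx_oddPos {k : ℕ} (r : Fin k) : halfIdx (oddPos k r) = r :=
  Fin.ext (show (2*r.1+1)/2 = r.1 by omega)

lemma flip2_evenPos {k : ℕ} (r : Fin k) : flip2 (evenPos k r) = oddPos k r :=
  Fin.ext (show 2*((2*r.1)/2) + (1 - (2*r.1) % 2) = 2*r.1+1 by omega)

lemma flip2_oddPos {k : ℕ} (r : Fin k) : flip2 (oddPos k r) = evenPos k r :=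
  Fin.ext (show 2*((2*r.1+1)/2) + (1 - (2*r.1+1) % 2) = 2*r.1 by omega)

lemma flip2_flip2 {k : ℕ} (i : Fin (2*k)) : flip2 (flip2 i) = i := by
  apply Fin.ext
  show 2*((2*(i.1/2) + (1 - i.1 % 2))/2) + (1 - (2*(i.1/2) + (1 - i.1 % 2)) % 2) = i.1
  omega

lemma flip2_ne {k : ℕ} (i : Fin (2*k)) : flip2 i ≠ i := by
  intro h
  have := congrArg Fin.val h
  simp only [flip2] at this
  omega

lemma even_or_odd_pos {k : ℕ} (i : Fin (2*k)) :
    i = evenPos k (halfIdx i) ∨ i = oddPos k (halfIdx i) := by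
  rcases Nat.mod_two_eq_zero_or_one i.1 with h | h
  · exact Or.inl (Fin.ext (show i.1 = 2*(i.1/2) by omega))
  · exact Or.inr (Fin.ext (show i.1 = 2*(i.1/2)+1 by omega))

/-! ### Emin of a pairing -/

def EminF {n : ℕ} (F : Fin n → Fin n) : Finset (Fin n) :=
  univ.filter (fun x => x < F x)

lemma mem_EminF {n : ℕ} {F : Fin n → Fin n} {x : Fin n} : x ∈ EminF F ↔ x < F x := by
  simp [EminF]

lemma card_EminF {k : ℕ} {F : Fin (2*k) → Fin (2*k)} (hF : IsPairing F) :
    (EminF F).card = k := by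
  classical
  have hsplit := Finset.card_filter_add_card_filter_not
    (s := (univ : Finset (Fin (2*k)))) (p := fun x => x < F x)
  have huniv : (univ : Finset (Fin (2*k))).card = 2*k := by
    rw [Finset.card_univ, Fintype.card_fin]
  have himg : univ.filter (fun x => ¬ x < F x) = (EminF F).image F := by
    ext x
    simp only [Finset.mem_filter, Finset.mem_univ, true_and, Finset.mem_image, mem_EminF]
    constructor
    · intro hx
      have hlt : F x < x := lt_of_le_of_ne (not_lt.mp hx) (hF.2 x)
      exact ⟨F x, by rw [hF.1 x]; exact hlt, hF.1 x⟩
    · rintro ⟨a, ha, rfl⟩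
      rw [hF.1 a]
      exact not_lt.mpr (le_of_lt ha)
  have hinj : Set.InjOn F (EminF F) := fun a _ b _ h => by
    have := congrArg F h; rwa [hF.1, hF.1] at this
  have hcard : ((EminF F).image F).card = (EminF F).card :=
    Finset.card_image_of_injOn hinj
  rw [himg, hcard] at hsplit
  simp only [EminF] at hsplit ⊢
  omega

/-! ### the canonical permutation attached to a pairing -/

noncomputable def toCanonFun (k : ℕ) (F : Fin (2*k) → Fin (2*k)) :
    Fin (2*k) → Fin (2*k) := fun i =>
  if hc : (EminF F).card = k then
    if i.1 % 2 = 0 then (EminF F).orderEmbOfFin hc (halfIdx i)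
    else F ((EminF F).orderEmbOfFin hc (halfIdx i))
  else i

lemma not_mem_EminF_apply {k : ℕ} {F : Fin (2*k) → Fin (2*k)} (hF : IsPairing F)
    {y : Fin (2*k)} (hy : y ∈ EminF F) : F y ∉ EminF F := by
  rw [mem_EminF] at hy ⊢
  rw [hF.1 y]
  exact not_lt.mpr (le_of_lt hy)

lemma toCanonFun_inj {k : ℕ} {F : Fin (2*k) → Fin (2*k)} (hF : IsPairing F) :
    Function.Injective (toCanonFun k F) := by
  intro i j h
  have hc := card_EminF hF
  rw [toCanonFun, toCanonFun, dif_pos hc, dif_pos hc] at h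
  set u := (EminF F).orderEmbOfFin hc with hu
  have humem : ∀ r, u r ∈ EminF F := fun r => Finset.orderEmbOfFin_mem _ _ _
  have hFinj : Function.Injective F := fun a b hab => by
    have := congrArg F hab; rwa [hF.1, hF.1] at this
  by_cases hi : i.1 % 2 = 0 <;> by_cases hj : j.1 % 2 = 0
  · rw [if_pos hi, if_pos hj] at h
    have := u.injective h
    have hv := congrArg Fin.val this
    simp only [halfIdx] at hv
    exact Fin.ext (by omega)
  · rw [if_pos hi, if_neg hj] at h
    exact absurd (h ▸ humem (halfIdx i)) (not_mem_EminF_apply hF (humem (halfIdx j)))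
  · rw [if_neg hi, if_pos hj] at h
    exact absurd (h ▸ humem (halfIdx j)) (not_mem_EminF_apply hF (humem (halfIdx i)))
  · rw [if_neg hi, if_neg hj] at h
    have := u.injective (hFinj h)
    have hv := congrArg Fin.val this
    simp only [halfIdx] at hv
    exact Fin.ext (by omega)

noncomputable def toCanonPerm (k : ℕ) (F : Fin (2*k) → Fin (2*k)) :
    Equiv.Perm (Fin (2*k)) :=
  if h : Function.Bijective (toCanonFun k F) then Equiv.ofBijective _ h else 1

lemma toCanonPerm_apply {k : ℕ} {F : Fin (2*k) → Fin (2*k)} (hF : IsPairing F)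
    (i : Fin (2*k)) : toCanonPerm k F i = toCanonFun k F i := by
  rw [toCanonPerm, dif_pos (Finite.injective_iff_bijective.mp (toCanonFun_inj hF))]
  rfl

lemma toCanonPerm_even {k : ℕ} {F : Fin (2*k) → Fin (2*k)} (hF : IsPairing F)
    (r : Fin k) : toCanonPerm k F (evenPos k r) =
      (EminF F).orderEmbOfFin (card_EminF hF) r := by
  rw [toCanonPerm_apply hF, toCanonFun, dif_pos (card_EminF hF),
    if_pos (show (evenPos k r).1 % 2 = 0 by show (2*r.1) % 2 = 0; omega), halfIdx_evenPos]

lemma toCanonPerm_odd {k : ℕ} {F : Fin (2*k) → Fin (2*k)} (hF : IsPairing F)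
    (r : Fin k) : toCanonPerm k F (oddPos k r) =
      F ((EminF F).orderEmbOfFin (card_EminF hF) r) := by
  have h1 : (oddPos k r).1 % 2 = 1 := by show (2*r.1+1) % 2 = 1; omega
  rw [toCanonPerm_apply hF, toCanonFun, dif_pos (card_EminF hF), if_neg (by omega),
    halfIdx_oddPos]

lemma isCanonical_toCanonPerm {k : ℕ} {F : Fin (2*k) → Fin (2*k)} (hF : IsPairing F) :
    IsCanonical (toCanonPerm k F) := by
  constructor
  · intro r
    rw [toCanonPerm_even hF, toCanonPerm_odd hF]
    exact mem_EminF.mp (Finset.orderEmbOfFin_mem _ _ _)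
  · intro r s hrs
    rw [toCanonPerm_even hF, toCanonPerm_even hF]
    exact ((EminF F).orderEmbOfFin (card_EminF hF)).strictMono hrs

/-! ### the pairing attached to a permutation -/

def toPairing {k : ℕ} (σ : Equiv.Perm (Fin (2*k))) : Fin (2*k) → Fin (2*k) :=
  fun x => σ (flip2 (σ.symm x))

lemma isPairing_toPairing {k : ℕ} (σ : Equiv.Perm (Fin (2*k))) :
    IsPairing (toPairing σ) := by
  constructor
  · intro i
    simp [toPairing, flip2_flip2]
  · intro i h
    rw [toPairing] at h
    nth_rewrite 2 [← σ.apply_symm_apply i] at h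
    exact flip2_ne _ (σ.injective h)

lemma toPairing_apply_even {k : ℕ} (σ : Equiv.Perm (Fin (2*k))) (r : Fin k) :
    toPairing σ (σ (evenPos k r)) = σ (oddPos k r) := by
  rw [toPairing, σ.symm_apply_apply, flip2_evenPos]

lemma toPairing_apply_odd {k : ℕ} (σ : Equiv.Perm (Fin (2*k))) (r : Fin k) :
    toPairing σ (σ (oddPos k r)) = σ (evenPos k r) := by
  rw [toPairing, σ.symm_apply_apply, flip2_oddPos]

lemma orderEmb_EminF_toPairing {k : ℕ} {σ : Equiv.Perm (Fin (2*k))} (hσ : IsCanonical σ)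
    (r : Fin k) : (EminF (toPairing σ)).orderEmbOfFin
      (card_EminF (isPairing_toPairing σ)) r = σ (evenPos k r) := by
  have key : (fun r : Fin k => σ (evenPos k r)) =
      (EminF (toPairing σ)).orderEmbOfFin (card_EminF (isPairing_toPairing σ)) := by
    apply Finset.orderEmbOfFin_unique
    · intro x
      rw [mem_EminF, toPairing_apply_even]
      exact hσ.1 x
    · intro x y hxy
      exact hσ.2 x y hxy
  rw [← key]

lemma toCanonPerm_toPairing {k : ℕ} {σ : Equiv.Perm (Fin (2*k))} (hσ : IsCanonical σ) :
    toCanonPerm k (toPairing σ) = σ := by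
  apply Equiv.ext
  intro i
  rcases even_or_odd_pos i with h | h
  · rw [h, toCanonPerm_even (isPairing_toPairing σ), orderEmb_EminF_toPairing hσ]
  · rw [h, toCanonPerm_odd (isPairing_toPairing σ), orderEmb_EminF_toPairing hσ,
      toPairing_apply_even]

lemma toPairing_toCanonPerm {k : ℕ} {F : Fin (2*k) → Fin (2*k)} (hF : IsPairing F) :
    toPairing (toCanonPerm k F) = F := by
  set σ := toCanonPerm k F with hσdef
  funext x
  have hx : x = σ (σ.symm x) := (σ.apply_symm_apply x).symm
  rw [hx]
  generalize σ.symm x = i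
  rcases even_or_odd_pos i with h | h
  · rw [h, toPairing_apply_even, toCanonPerm_odd hF, toCanonPerm_even hF]
  · rw [h, toPairing_apply_odd, toCanonPerm_even hF, toCanonPerm_odd hF, hF.1]

/-! ### the Pfaffian-type sum, re-expressed over pairings -/

def pfS (k : ℕ) {n : ℕ} {R : Type*} [CommRing R] (f : Fin (2*k) → Fin n)
    (M : Matrix (Fin n) (Fin n) R) : R :=
  ∑ σ ∈ Finset.univ.filter (fun σ : Equiv.Perm (Fin (2*k)) => IsCanonical σ),
    ((Equiv.Perm.sign σ : ℤ) : R) *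
      ∏ r : Fin k, M (f (σ (evenPos k r))) (f (σ (oddPos k r)))

theorem pfS_eq_pairings {n k : ℕ} {R : Type*} [CommRing R] (f : Fin (2*k) → Fin n)
    (M : Matrix (Fin n) (Fin n) R) :
    pfS k f M = ∑ F ∈ Finset.univ.filter
        (fun F : Fin (2*k) → Fin (2*k) => IsPairing F),
      ((Equiv.Perm.sign (toCanonPerm k F) : ℤ) : R) * ∏ x ∈ EminF F, M (f x) (f (F x)) := by
  classical
  rw [pfS]
  refine Finset.sum_bij' (fun σ _ => toPairing σ) (fun F _ => toCanonPerm k F)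
    ?_ ?_ ?_ ?_ ?_
  · intro σ hσ
    simp only [Finset.mem_filter, Finset.mem_univ, true_and]
    exact isPairing_toPairing σ
  · intro F hF
    simp only [Finset.mem_filter, Finset.mem_univ, true_and] at hF ⊢
    exact isCanonical_toCanonPerm hF
  · intro σ hσ
    simp only [Finset.mem_filter, Finset.mem_univ, true_and] at hσ
    exact toCanonPerm_toPairing hσ
  · intro F hF
    simp only [Finset.mem_filter, Finset.mem_univ, true_and] at hF
    exact toPairing_toCanonPerm hF
  · intro σ hσ
    simp only [Finset.mem_filter, Finset.mem_univ, true_and] at hσ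
    rw [toCanonPerm_toPairing hσ]
    congr 1
    refine Finset.prod_bij (fun r _ => σ (evenPos k r)) ?_ ?_ ?_ ?_
    · intro r _
      rw [mem_EminF, toPairing_apply_even]
      exact hσ.1 r
    · intro a _ b _ hab
      have := σ.injective hab
      have hv := congrArg Fin.val this
      simp only [evenPos] at hv
      exact Fin.ext (by omega)
    · intro x hx
      rw [mem_EminF] at hx
      refine ⟨halfIdx (σ.symm x), Finset.mem_univ _, ?_⟩
      rcases even_or_odd_pos (σ.symm x) with h | h
      · conv_rhs => rw [← σ.apply_symm_apply x]
        rw [← h]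
      · exfalso
        have hxeq : x = σ (oddPos k (halfIdx (σ.symm x))) := by
          conv_lhs => rw [← σ.apply_symm_apply x]
          rw [← h]
        rw [hxeq, toPairing_apply_odd] at hx
        exact absurd (hσ.1 (halfIdx (σ.symm x))) (not_lt.mpr (le_of_lt hx))
    · intro r _
      rw [toPairing_apply_even]

/-! ### sign of a pair-block permutation is 1 -/

def pairProdEquiv (k : ℕ) : Fin k × Fin 2 ≃ Fin (2*k) where
  toFun p := ⟨2*p.1.1 + p.2.1, by have := p.1.2; have := p.2.2; omega⟩
  invFun i := (halfIdx i, ⟨i.1 % 2, by omega⟩)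
  left_inv p := by
    obtain ⟨r, j⟩ := p
    have hj := j.2
    refine Prod.ext (Fin.ext ?_) (Fin.ext ?_)
    · show (2*r.1 + j.1)/2 = r.1
      omega
    · show (2*r.1 + j.1) % 2 = j.1
      omega
  right_inv i := by
    apply Fin.ext
    show 2*(i.1/2) + i.1 % 2 = i.1
    omega

lemma sign_blockPerm {k : ℕ} (π : Equiv.Perm (Fin (2*k)))
    (h1 : ∀ r : Fin k, (π (evenPos k r)).1 % 2 = 0)
    (h2 : ∀ r : Fin k, (π (oddPos k r)).1 = (π (evenPos k r)).1 + 1) :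
    Equiv.Perm.sign π = 1 := by
  have hinj : Function.Injective (fun r : Fin k => halfIdx (π (evenPos k r))) := by
    intro a b hab
    have hva := h1 a
    have hvb := h1 b
    have hv := congrArg Fin.val hab
    simp only [halfIdx] at hv
    have heq : (π (evenPos k a)).1 = (π (evenPos k b)).1 := by omega
    have := π.injective (Fin.ext heq)
    have hv2 := congrArg Fin.val this
    simp only [evenPos] at hv2
    exact Fin.ext (by omega)
  let ρ : Equiv.Perm (Fin k) :=
    Equiv.ofBijective _ (Finite.injective_iff_bijective.mp hinj)
  have hπ : π = (pairProdEquiv k).permCongr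
      (Equiv.prodCongrLeft (fun _ : Fin 2 => ρ)) := by
    apply Equiv.ext
    intro i
    apply Fin.ext
    show (π i).1 = 2 * ((π (evenPos k (halfIdx i))).1 / 2) + i.1 % 2
    rcases even_or_odd_pos i with h | h
    · obtain ⟨r, rfl⟩ : ∃ r, i = evenPos k r := ⟨halfIdx i, h⟩
      rw [halfIdx_evenPos]
      have h1r := h1 r
      show (π (evenPos k r)).1 = 2 * ((π (evenPos k r)).1 / 2) + (2*r.1) % 2
      omega
    · obtain ⟨r, rfl⟩ : ∃ r, i = oddPos k r := ⟨halfIdx i, h⟩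
      rw [halfIdx_oddPos]
      have h1r := h1 r
      have h2r := h2 r
      show (π (oddPos k r)).1 = 2 * ((π (evenPos k r)).1 / 2) + (2*r.1+1) % 2
      omega
  rw [hπ, Equiv.Perm.sign_permCongr, Equiv.Perm.sign_prodCongrLeft]
  rw [Finset.prod_const, Finset.card_univ, Fintype.card_fin]
  exact Int.units_sq _

/-! ### unfolding `pfaffian` and `subPfaff` to `pfS` -/

lemma pfaffianAux_eq_pfS {R : Type*} [CommRing R] {n k k' : ℕ} (h : 2*k' = 2*k)
    (f : Fin (2*k) → Fin n) (M : Matrix (Fin n) (Fin n) R) :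
    pfaffianAux k' (Matrix.of fun a b : Fin (2*k') =>
      M (f (Fin.cast h a)) (f (Fin.cast h b))) = pfS k f M := by
  have hk : k' = k := by omega
  subst hk
  rw [pfaffianAux, pfS]
  apply Finset.sum_congr rfl
  intro σ _
  congr 1

lemma pfaffian_eq_pfS {R : Type*} [CommRing R] {k : ℕ}
    (M : Matrix (Fin (2*k)) (Fin (2*k)) R) : pfaffian M = pfS k id M := by
  rw [pfaffian, dif_pos ⟨k, two_mul k⟩]
  exact pfaffianAux_eq_pfS _ id M

lemma subPfaff_eq_pfS {R : Type*} [CommRing R] {n : ℕ} (M : Matrix (Fin n) (Fin n) R)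
    (I : Finset (Fin n)) {a : ℕ} (hA : 2*a = I.card) :
    subPfaff M I = pfS a (fun x => (I.orderEmbOfFin hA.symm x : Fin n)) M := by
  rw [subPfaff, pfaffian, dif_pos ⟨a, by omega⟩]
  refine Eq.trans ?_ (pfaffianAux_eq_pfS (by omega : 2*(I.card/2) = 2*a)
    (fun x => (I.orderEmbOfFin hA.symm x : Fin n)) M)
  congr 1

/-! ### restricting and gluing pairings along a subset -/

section ConjGlue

variable {n : ℕ} (I : Finset (Fin n)) {a b : ℕ} (hA : 2*a = I.card) (hB : 2*b = Iᶜ.card)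

lemma emb_iso_symm (y : Fin n) (hy : y ∈ I) :
    I.orderEmbOfFin hA.symm ((I.orderIsoOfFin hA.symm).symm ⟨y, hy⟩) = y := by
  rw [← Finset.coe_orderIsoOfFin_apply, OrderIso.apply_symm_apply]

lemma iso_symm_emb (x : Fin (2*a)) (h : (I.orderEmbOfFin hA.symm x : Fin n) ∈ I) :
    (I.orderIsoOfFin hA.symm).symm ⟨I.orderEmbOfFin hA.symm x, h⟩ = x := by
  have h1 : (⟨I.orderEmbOfFin hA.symm x, h⟩ : {y // y ∈ I}) = I.orderIsoOfFin hA.symm x :=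
    Subtype.ext (Finset.coe_orderIsoOfFin_apply _ _ _).symm
  rw [h1, OrderIso.symm_apply_apply]

def conjP (F : Fin n → Fin n) : Fin (2*a) → Fin (2*a) := fun x =>
  if hm : F (I.orderEmbOfFin hA.symm x) ∈ I then (I.orderIsoOfFin hA.symm).symm
    ⟨F (I.orderEmbOfFin hA.symm x), hm⟩ else x

def glueP (G : Fin (2*a) → Fin (2*a)) (H : Fin (2*b) → Fin (2*b)) :
    Fin n → Fin n := fun x =>
  if hx : x ∈ I then
    I.orderEmbOfFin hA.symm (G ((I.orderIsoOfFin hA.symm).symm ⟨x, hx⟩))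
  else
    Iᶜ.orderEmbOfFin hB.symm (H ((Iᶜ.orderIsoOfFin hB.symm).symm
      ⟨x, Finset.mem_compl.mpr hx⟩))

variable {G : Fin (2*a) → Fin (2*a)} {H : Fin (2*b) → Fin (2*b)} {F : Fin n → Fin n}

lemma conjP_emb (hFI : ∀ x ∈ I, F x ∈ I) (x : Fin (2*a)) :
    I.orderEmbOfFin hA.symm (conjP I hA F x) = F (I.orderEmbOfFin hA.symm x) := by
  rw [conjP, dif_pos (hFI _ (Finset.orderEmbOfFin_mem _ _ _))]
  exact emb_iso_symm I hA _ _

lemma glueP_emb (x : Fin (2*a)) :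
    glueP I hA hB G H (I.orderEmbOfFin hA.symm x) = I.orderEmbOfFin hA.symm (G x) := by
  rw [glueP, dif_pos (Finset.orderEmbOfFin_mem _ _ _)]
  rw [iso_symm_emb I hA]

lemma glueP_embc (x : Fin (2*b)) :
    glueP I hA hB G H (Iᶜ.orderEmbOfFin hB.symm x) = Iᶜ.orderEmbOfFin hB.symm (H x) := by
  have hmem : (Iᶜ.orderEmbOfFin hB.symm x : Fin n) ∈ Iᶜ := Finset.orderEmbOfFin_mem _ _ _
  rw [glueP, dif_neg (Finset.mem_compl.mp hmem)]
  exact congrArg _ (congrArg H (iso_symm_emb Iᶜ hB x hmem))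

lemma glueP_mem {x : Fin n} (hx : x ∈ I) : glueP I hA hB G H x ∈ I := by
  rw [glueP, dif_pos hx]
  exact Finset.orderEmbOfFin_mem _ _ _

lemma glueP_not_mem {x : Fin n} (hx : x ∉ I) : glueP I hA hB G H x ∈ Iᶜ := by
  rw [glueP, dif_neg hx]
  exact Finset.orderEmbOfFin_mem _ _ _

lemma glueP_apply_mem {x : Fin n} (hx : x ∈ I) :
    glueP I hA hB G H x =
      I.orderEmbOfFin hA.symm (G ((I.orderIsoOfFin hA.symm).symm ⟨x, hx⟩)) := by
  rw [glueP, dif_pos hx]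

lemma isPairing_glueP (hG : IsPairing G) (hH : IsPairing H) :
    IsPairing (glueP I hA hB G H) := by
  constructor
  · intro x
    by_cases hx : x ∈ I
    · rw [glueP_apply_mem I hA hB hx, glueP_emb, hG.1, emb_iso_symm I hA]
    · have hx' : x ∈ Iᶜ := Finset.mem_compl.mpr hx
      have h1 : glueP I hA hB G H x =
          Iᶜ.orderEmbOfFin hB.symm (H ((Iᶜ.orderIsoOfFin hB.symm).symm ⟨x, hx'⟩)) := by
        rw [glueP, dif_neg hx]
      rw [h1, glueP_embc, hH.1, emb_iso_symm Iᶜ hB]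
  · intro x hfix
    by_cases hx : x ∈ I
    · rw [glueP_apply_mem I hA hB hx] at hfix
      have h2 : I.orderEmbOfFin hA.symm ((I.orderIsoOfFin hA.symm).symm ⟨x, hx⟩) = x :=
        emb_iso_symm I hA x hx
      have := (I.orderEmbOfFin hA.symm).injective (hfix.trans h2.symm)
      exact hG.2 _ this
    · have hx' : x ∈ Iᶜ := Finset.mem_compl.mpr hx
      rw [glueP, dif_neg hx] at hfix
      have h2 : Iᶜ.orderEmbOfFin hB.symm ((Iᶜ.orderIsoOfFin hB.symm).symm ⟨x, hx'⟩) = x :=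
        emb_iso_symm Iᶜ hB x hx'
      have := (Iᶜ.orderEmbOfFin hB.symm).injective (hfix.trans h2.symm)
      exact hH.2 _ this

lemma isPairing_conjP (hF : IsPairing F) (hFI : ∀ x ∈ I, F x ∈ I) :
    IsPairing (conjP I hA F) := by
  constructor
  · intro x
    apply (I.orderEmbOfFin hA.symm).injective
    rw [conjP_emb I hA hFI, conjP_emb I hA hFI, hF.1]
  · intro x hfix
    have h1 := conjP_emb I hA hFI x
    rw [hfix] at h1
    exact hF.2 _ h1.symm

lemma conjP_glueP (hFI : ∀ x ∈ I, glueP I hA hB G H x ∈ I) :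
    conjP I hA (glueP I hA hB G H) = G := by
  funext x
  apply (I.orderEmbOfFin hA.symm).injective
  rw [conjP_emb I hA hFI, glueP_emb]

lemma conjP_glueP_compl (hFI : ∀ x ∈ Iᶜ, glueP I hA hB G H x ∈ Iᶜ) :
    conjP Iᶜ hB (glueP I hA hB G H) = H := by
  funext x
  apply (Iᶜ.orderEmbOfFin hB.symm).injective
  rw [conjP_emb Iᶜ hB hFI, glueP_embc]

lemma compl_stable (hF : IsPairing F) (hFI : ∀ x ∈ I, F x ∈ I) :
    ∀ x ∈ Iᶜ, F x ∈ Iᶜ := by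
  intro x hx
  rw [Finset.mem_compl] at hx ⊢
  intro hFx
  exact hx (by rw [← hF.1 x]; exact hFI _ hFx)

lemma glueP_conjP (hF : IsPairing F) (hFI : ∀ x ∈ I, F x ∈ I) :
    glueP I hA hB (conjP I hA F) (conjP Iᶜ hB F) = F := by
  funext x
  by_cases hx : x ∈ I
  · rw [glueP_apply_mem I hA hB hx, conjP_emb I hA hFI, emb_iso_symm I hA]
  · have hx' : x ∈ Iᶜ := Finset.mem_compl.mpr hx
    rw [glueP, dif_neg hx, conjP_emb Iᶜ hB (compl_stable I hF hFI), emb_iso_symm Iᶜ hB]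

lemma mem_EminF_conjP (hFI : ∀ x ∈ I, F x ∈ I) {x : Fin (2*a)} :
    x ∈ EminF (conjP I hA F) ↔ (I.orderEmbOfFin hA.symm x : Fin n) ∈ EminF F := by
  rw [mem_EminF, mem_EminF, ← conjP_emb I hA hFI]
  exact ⟨fun h => (I.orderEmbOfFin hA.symm).strictMono h,
    fun h => (I.orderEmbOfFin hA.symm).lt_iff_lt.mp h⟩

lemma image_emb_EminF (hFI : ∀ x ∈ I, F x ∈ I) :
    (EminF (conjP I hA F)).image (I.orderEmbOfFin hA.symm) = EminF F ∩ I := by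
  ext y
  simp only [Finset.mem_image, Finset.mem_inter]
  constructor
  · rintro ⟨x, hx, rfl⟩
    exact ⟨(mem_EminF_conjP I hA hFI).mp hx, Finset.orderEmbOfFin_mem _ _ _⟩
  · rintro ⟨hy1, hy2⟩
    refine ⟨(I.orderIsoOfFin hA.symm).symm ⟨y, hy2⟩, ?_, emb_iso_symm I hA y hy2⟩
    rw [mem_EminF_conjP I hA hFI, emb_iso_symm I hA]
    exact hy1

end ConjGlue

/-! ### sorting lemma : sign of the canonical form of a pair-increasing permutation -/

lemma sign_toCanon_toPairing {k : ℕ} (σ' : Equiv.Perm (Fin (2*k)))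
    (hpi : ∀ r : Fin k, σ' (evenPos k r) < σ' (oddPos k r)) :
    Equiv.Perm.sign (toCanonPerm k (toPairing σ')) = Equiv.Perm.sign σ' := by
  set F := toPairing σ' with hF
  have hFp : IsPairing F := isPairing_toPairing σ'
  set σc := toCanonPerm k F with hσc
  have key : ∀ r : Fin k, ∃ s : Fin k,
      σ'.symm (σc (evenPos k r)) = evenPos k s ∧ σ'.symm (σc (oddPos k r)) = oddPos k s := by
    intro r
    have hodd : σc (oddPos k r) = F (σc (evenPos k r)) := by
      rw [hσc, toCanonPerm_odd hFp, toCanonPerm_even hFp]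
    rcases even_or_odd_pos (σ'.symm (σc (evenPos k r))) with h | h
    · set s := halfIdx (σ'.symm (σc (evenPos k r))) with hs
      refine ⟨s, h, ?_⟩
      have h2 : σc (evenPos k r) = σ' (evenPos k s) := by
        rw [← h, Equiv.apply_symm_apply]
      rw [Equiv.symm_apply_eq, hodd, h2, hF, toPairing_apply_even]
    · exfalso
      set s := halfIdx (σ'.symm (σc (evenPos k r))) with hs
      have h2 : σc (evenPos k r) = σ' (oddPos k s) := by
        rw [← h, Equiv.apply_symm_apply]
      have hmem : σc (evenPos k r) ∈ EminF F := by
        rw [hσc, toCanonPerm_even hFp]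
        exact Finset.orderEmbOfFin_mem _ _ _
      rw [mem_EminF] at hmem
      rw [h2, hF, toPairing_apply_odd] at hmem
      exact absurd (hpi _) (not_lt.mpr (le_of_lt hmem))
  set π : Equiv.Perm (Fin (2*k)) := σc.trans σ'.symm with hπ
  have hπ_apply : ∀ x, π x = σ'.symm (σc x) := fun x => rfl
  have h1 : ∀ r : Fin k, (π (evenPos k r)).1 % 2 = 0 := by
    intro r
    obtain ⟨s, hs, _⟩ := key r
    rw [hπ_apply, hs]
    show (2*s.1) % 2 = 0
    omega
  have h2 : ∀ r, (π (oddPos k r)).1 = (π (evenPos k r)).1 + 1 := by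
    intro r
    obtain ⟨s, hs1, hs2⟩ := key r
    rw [hπ_apply, hπ_apply, hs1, hs2]
    rfl
  have hsgn := sign_blockPerm π h1 h2
  have hcomp : σc = σ' * π := by
    apply Equiv.ext
    intro x
    rw [Equiv.Perm.mul_apply, hπ_apply, Equiv.apply_symm_apply]
  rw [hcomp, Equiv.Perm.sign_mul, hsgn, mul_one]

/-! ### the riffle equivalence, revisited -/

def ePsi {p q m : ℕ} (hab : p + q = m) : Fin m ≃ (Fin p ⊕ Fin q) :=
  (finCongr hab.symm).trans finSumFinEquiv.symm

lemma ePsi_eval {p q m : ℕ} (hab : p + q = m) (j : Fin m) :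
    ePsi hab j = if h : j.1 < p then Sum.inl ⟨j.1, h⟩
      else Sum.inr ⟨j.1 - p, by have := j.2; omega⟩ := by
  rw [ePsi, Equiv.trans_apply]
  split_ifs with h
  · rw [Equiv.symm_apply_eq, finSumFinEquiv_apply_left]
    exact (Fin.ext rfl : (finCongr hab.symm j : Fin (p+q)) = _)
  · rw [Equiv.symm_apply_eq, finSumFinEquiv_apply_right]
    exact Fin.ext (by show j.1 = p + (j.1 - p); omega)



section SignGlue

variable {k a b : ℕ} (I : Finset (Fin (2*k))) (hA : 2*a = I.card) (hB : 2*b = Iᶜ.card)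
  (hab : 2*a + 2*b = 2*k)

def PhiE : (Fin (2*a) ⊕ Fin (2*b)) ≃ Fin (2*k) :=
  (Equiv.sumCongr (I.orderIsoOfFin hA.symm).toEquiv
    ((Iᶜ.orderIsoOfFin hB.symm).toEquiv.trans
      (Equiv.subtypeEquivRight (fun x => Finset.mem_compl)))).trans
    (Equiv.sumCompl (· ∈ I))

lemma PhiE_inl (u : Fin (2*a)) :
    PhiE I hA hB (Sum.inl u) = I.orderEmbOfFin hA.symm u := by
  simp [PhiE, Finset.coe_orderIsoOfFin_apply]

lemma PhiE_inr (v : Fin (2*b)) :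
    PhiE I hA hB (Sum.inr v) = Iᶜ.orderEmbOfFin hB.symm v := by
  simp [PhiE, Equiv.subtypeEquivRight_apply, Finset.coe_orderIsoOfFin_apply]

noncomputable def wEquiv : Equiv.Perm (Fin (2*k)) := (ePsi hab).trans (PhiE I hA hB)

lemma wEquiv_eq_wPerm : wEquiv I hA hB hab = wPerm I := by
  apply Equiv.ext
  intro j
  have hw : wEquiv I hA hB hab j = PhiE I hA hB (ePsi hab j) := rfl
  rw [wPerm_apply, wFun, hw, ePsi_eval]
  by_cases h : j.1 < 2*a
  · rw [dif_pos h, dif_pos (show j.1 < I.card by omega), PhiE_inl]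
    exact Finset.orderEmbOfFin_eq_orderEmbOfFin_iff.mpr rfl
  · rw [dif_neg h, dif_neg (show ¬ j.1 < I.card by omega), PhiE_inr]
    refine Finset.orderEmbOfFin_eq_orderEmbOfFin_iff.mpr ?_
    show j.1 - 2*a = j.1 - I.card
    omega

variable (G : Fin (2*a) → Fin (2*a)) (H : Fin (2*b) → Fin (2*b))

noncomputable def sigmaGlue : Equiv.Perm (Fin (2*k)) :=
  (ePsi hab).trans ((Equiv.sumCongr (toCanonPerm a G) (toCanonPerm b H)).trans
    (PhiE I hA hB))

lemma sigmaGlue_even_lt (r : Fin k) (hr : r.1 < a) :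
    sigmaGlue I hA hB hab G H (evenPos k r) =
      I.orderEmbOfFin hA.symm (toCanonPerm a G (evenPos a ⟨r.1, hr⟩)) := by
  have hlt : (evenPos k r).1 < 2*a := by show 2*r.1 < 2*a; omega
  have h1 : ePsi hab (evenPos k r) = Sum.inl (evenPos a ⟨r.1, hr⟩) := by
    rw [ePsi_eval, dif_pos hlt]
    exact congrArg Sum.inl (Fin.ext rfl)
  have hw : sigmaGlue I hA hB hab G H (evenPos k r) = PhiE I hA hB
      ((Equiv.sumCongr (toCanonPerm a G) (toCanonPerm b H)) (ePsi hab (evenPos k r))) := rfl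
  rw [hw, h1, Equiv.sumCongr_apply, Sum.map_inl, PhiE_inl]

lemma sigmaGlue_odd_lt (r : Fin k) (hr : r.1 < a) :
    sigmaGlue I hA hB hab G H (oddPos k r) =
      I.orderEmbOfFin hA.symm (toCanonPerm a G (oddPos a ⟨r.1, hr⟩)) := by
  have hlt : (oddPos k r).1 < 2*a := by show 2*r.1+1 < 2*a; omega
  have h1 : ePsi hab (oddPos k r) = Sum.inl (oddPos a ⟨r.1, hr⟩) := by
    rw [ePsi_eval, dif_pos hlt]
    exact congrArg Sum.inl (Fin.ext rfl)
  have hw : sigmaGlue I hA hB hab G H (oddPos k r) = PhiE I hA hB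
      ((Equiv.sumCongr (toCanonPerm a G) (toCanonPerm b H)) (ePsi hab (oddPos k r))) := rfl
  rw [hw, h1, Equiv.sumCongr_apply, Sum.map_inl, PhiE_inl]

lemma sigmaGlue_even_ge (r : Fin k) (hr : ¬ r.1 < a) :
    sigmaGlue I hA hB hab G H (evenPos k r) =
      Iᶜ.orderEmbOfFin hB.symm (toCanonPerm b H
        (evenPos b ⟨r.1 - a, by have := r.2; omega⟩)) := by
  have hlt : ¬ (evenPos k r).1 < 2*a := by show ¬ 2*r.1 < 2*a; omega
  have h1 : ePsi hab (evenPos k r) =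
      Sum.inr (evenPos b ⟨r.1 - a, by have := r.2; omega⟩) := by
    rw [ePsi_eval, dif_neg hlt]
    exact congrArg Sum.inr (Fin.ext (show (evenPos k r).1 - 2*a = 2*(r.1-a) by
      show 2*r.1 - 2*a = 2*(r.1-a); omega))
  have hw : sigmaGlue I hA hB hab G H (evenPos k r) = PhiE I hA hB
      ((Equiv.sumCongr (toCanonPerm a G) (toCanonPerm b H)) (ePsi hab (evenPos k r))) := rfl
  rw [hw, h1, Equiv.sumCongr_apply, Sum.map_inr, PhiE_inr]

lemma sigmaGlue_odd_ge (r : Fin k) (hr : ¬ r.1 < a) :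
    sigmaGlue I hA hB hab G H (oddPos k r) =
      Iᶜ.orderEmbOfFin hB.symm (toCanonPerm b H
        (oddPos b ⟨r.1 - a, by have := r.2; omega⟩)) := by
  have hlt : ¬ (oddPos k r).1 < 2*a := by show ¬ 2*r.1+1 < 2*a; omega
  have h1 : ePsi hab (oddPos k r) =
      Sum.inr (oddPos b ⟨r.1 - a, by have := r.2; omega⟩) := by
    rw [ePsi_eval, dif_neg hlt]
    exact congrArg Sum.inr (Fin.ext (show (oddPos k r).1 - 2*a = 2*(r.1-a)+1 by
      show 2*r.1+1 - 2*a = 2*(r.1-a)+1; omega))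
  have hw : sigmaGlue I hA hB hab G H (oddPos k r) = PhiE I hA hB
      ((Equiv.sumCongr (toCanonPerm a G) (toCanonPerm b H)) (ePsi hab (oddPos k r))) := rfl
  rw [hw, h1, Equiv.sumCongr_apply, Sum.map_inr, PhiE_inr]

lemma sigmaGlue_pair_increasing (hG : IsPairing G) (hH : IsPairing H) :
    ∀ r : Fin k, sigmaGlue I hA hB hab G H (evenPos k r) <
      sigmaGlue I hA hB hab G H (oddPos k r) := by
  intro r
  by_cases hr : r.1 < a
  · rw [sigmaGlue_even_lt I hA hB hab G H r hr, sigmaGlue_odd_lt I hA hB hab G H r hr]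
    exact (I.orderEmbOfFin hA.symm).strictMono
      ((isCanonical_toCanonPerm hG).1 ⟨r.1, hr⟩)
  · rw [sigmaGlue_even_ge I hA hB hab G H r hr, sigmaGlue_odd_ge I hA hB hab G H r hr]
    exact (Iᶜ.orderEmbOfFin hB.symm).strictMono
      ((isCanonical_toCanonPerm hH).1 _)

lemma toPairing_sigmaGlue (hG : IsPairing G) (hH : IsPairing H) :
    toPairing (sigmaGlue I hA hB hab G H) = glueP I hA hB G H := by
  have hG1 : ∀ s, G (toCanonPerm a G (evenPos a s)) = toCanonPerm a G (oddPos a s) :=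
    fun s => by rw [← toPairing_apply_even (toCanonPerm a G) s, toPairing_toCanonPerm hG]
  have hG2 : ∀ s, G (toCanonPerm a G (oddPos a s)) = toCanonPerm a G (evenPos a s) :=
    fun s => by rw [← toPairing_apply_odd (toCanonPerm a G) s, toPairing_toCanonPerm hG]
  have hH1 : ∀ s, H (toCanonPerm b H (evenPos b s)) = toCanonPerm b H (oddPos b s) :=
    fun s => by rw [← toPairing_apply_even (toCanonPerm b H) s, toPairing_toCanonPerm hH]
  have hH2 : ∀ s, H (toCanonPerm b H (oddPos b s)) = toCanonPerm b H (evenPos b s) :=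
    fun s => by rw [← toPairing_apply_odd (toCanonPerm b H) s, toPairing_toCanonPerm hH]
  set σ' := sigmaGlue I hA hB hab G H with hσ'
  funext x
  have hx : x = σ' (σ'.symm x) := (σ'.apply_symm_apply x).symm
  rw [hx]
  generalize σ'.symm x = i
  rcases even_or_odd_pos i with h | h
  · rw [h, toPairing_apply_even]
    by_cases hr : (halfIdx i).1 < a
    · rw [hσ', sigmaGlue_even_lt I hA hB hab G H _ hr, sigmaGlue_odd_lt I hA hB hab G H _ hr,
        glueP_emb, hG1]
    · rw [hσ', sigmaGlue_even_ge I hA hB hab G H _ hr, sigmaGlue_odd_ge I hA hB hab G H _ hr,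
        glueP_embc, hH1]
  · rw [h, toPairing_apply_odd]
    by_cases hr : (halfIdx i).1 < a
    · rw [hσ', sigmaGlue_odd_lt I hA hB hab G H _ hr, sigmaGlue_even_lt I hA hB hab G H _ hr,
        glueP_emb, hG2]
    · rw [hσ', sigmaGlue_odd_ge I hA hB hab G H _ hr, sigmaGlue_even_ge I hA hB hab G H _ hr,
        glueP_embc, hH2]

theorem sign_glueP (hG : IsPairing G) (hH : IsPairing H) :
    Equiv.Perm.sign (toCanonPerm k (glueP I hA hB G H)) =
      Equiv.Perm.sign (wPerm I) * Equiv.Perm.sign (toCanonPerm a G) *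
        Equiv.Perm.sign (toCanonPerm b H) := by
  have hab : 2*a + 2*b = 2*k := by
    have h := I.card_add_card_compl
    simp only [Fintype.card_fin] at h
    omega
  rw [← toPairing_sigmaGlue I hA hB hab G H hG hH,
    sign_toCanon_toPairing _ (sigmaGlue_pair_increasing I hA hB hab G H hG hH)]
  have hdecomp : sigmaGlue I hA hB hab G H =
      ((PhiE I hA hB).permCongr (Equiv.sumCongr (toCanonPerm a G) (toCanonPerm b H))) *
        wEquiv I hA hB hab := by
    apply Equiv.ext
    intro j
    rw [Equiv.Perm.mul_apply]
    have hl : sigmaGlue I hA hB hab G H j = PhiE I hA hB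
        ((Equiv.sumCongr (toCanonPerm a G) (toCanonPerm b H)) (ePsi hab j)) := rfl
    have hr : wEquiv I hA hB hab j = PhiE I hA hB (ePsi hab j) := rfl
    rw [hl, hr, Equiv.permCongr_apply, Equiv.symm_apply_apply]
  rw [hdecomp, Equiv.Perm.sign_mul, Equiv.Perm.sign_permCongr, Equiv.Perm.sign_sumCongr,
    wEquiv_eq_wPerm]
  exact (mul_rotate _ _ _).symm

end SignGlue

/-! ### auxiliary facts about a pairing restricted to an invariant subset -/

lemma pairT_disjoint {n : ℕ} {F : Fin n → Fin n} (hF : IsPairing F) {T : Finset (Fin n)}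
    (hT : T ⊆ EminF F) : Disjoint T (T.image F) := by
  rw [Finset.disjoint_left]
  intro x hxT hxim
  obtain ⟨t, htT, rfl⟩ := Finset.mem_image.mp hxim
  have h1 : t < F t := mem_EminF.mp (hT htT)
  have h2 : F t < F (F t) := mem_EminF.mp (hT hxT)
  rw [hF.1] at h2
  exact absurd h1 (not_lt.mpr (le_of_lt h2))

lemma card_pairT {n : ℕ} {F : Fin n → Fin n} (hF : IsPairing F) {T : Finset (Fin n)}
    (hT : T ⊆ EminF F) : (T ∪ T.image F).card = 2 * T.card := by
  rw [Finset.card_union_of_disjoint (pairT_disjoint hF hT),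
    Finset.card_image_of_injOn (fun x _ y _ h => by
      have := congrArg F h; rwa [hF.1, hF.1] at this)]
  ring

lemma T_eq_inter {n : ℕ} {F : Fin n → Fin n} (hF : IsPairing F) {T I : Finset (Fin n)}
    (hT : T ⊆ EminF F) (hI : T ∪ T.image F = I) : T = EminF F ∩ I := by
  apply Finset.Subset.antisymm
  · intro x hx
    exact Finset.mem_inter.mpr ⟨hT hx, hI ▸ Finset.mem_union_left _ hx⟩
  · intro x hx
    obtain ⟨hxE, hxI⟩ := Finset.mem_inter.mp hx
    rw [← hI] at hxI
    rcases Finset.mem_union.mp hxI with h | h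
    · exact h
    · exfalso
      obtain ⟨t, htT, rfl⟩ := Finset.mem_image.mp h
      have h1 : t < F t := mem_EminF.mp (hT htT)
      have h2 : F t < F (F t) := mem_EminF.mp hxE
      rw [hF.1] at h2
      exact absurd h1 (not_lt.mpr (le_of_lt h2))

lemma stable_of_union {n : ℕ} {F : Fin n → Fin n} (hF : IsPairing F) {T I : Finset (Fin n)}
    (hI : T ∪ T.image F = I) : ∀ x ∈ I, F x ∈ I := by
  intro x hx
  rw [← hI] at hx ⊢
  rcases Finset.mem_union.mp hx with h | h
  · exact Finset.mem_union_right _ (Finset.mem_image_of_mem F h)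
  · obtain ⟨t, htT, rfl⟩ := Finset.mem_image.mp h
    rw [hF.1]
    exact Finset.mem_union_left _ htT

lemma glue_T_subset {n : ℕ} (I : Finset (Fin n)) {a b : ℕ} (hA : 2*a = I.card)
    (hB : 2*b = Iᶜ.card) {G : Fin (2*a) → Fin (2*a)} {H : Fin (2*b) → Fin (2*b)} :
    (EminF G).image (I.orderEmbOfFin hA.symm) ⊆ EminF (glueP I hA hB G H) := by
  intro x hx
  obtain ⟨u, hu, rfl⟩ := Finset.mem_image.mp hx
  rw [mem_EminF, glueP_emb]
  exact (I.orderEmbOfFin hA.symm).strictMono (mem_EminF.mp hu)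

lemma glue_T_union {n : ℕ} (I : Finset (Fin n)) {a b : ℕ} (hA : 2*a = I.card)
    (hB : 2*b = Iᶜ.card) {G : Fin (2*a) → Fin (2*a)} {H : Fin (2*b) → Fin (2*b)}
    (hG : IsPairing G) :
    (EminF G).image (I.orderEmbOfFin hA.symm) ∪
      ((EminF G).image (I.orderEmbOfFin hA.symm)).image (glueP I hA hB G H) = I := by
  apply Finset.Subset.antisymm
  · intro x hx
    rcases Finset.mem_union.mp hx with h | h
    · obtain ⟨u, _, rfl⟩ := Finset.mem_image.mp h
      exact Finset.orderEmbOfFin_mem _ _ _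
    · obtain ⟨y, hy, rfl⟩ := Finset.mem_image.mp h
      obtain ⟨u, _, rfl⟩ := Finset.mem_image.mp hy
      rw [glueP_emb]
      exact Finset.orderEmbOfFin_mem _ _ _
  · intro y hy
    have hyemb : I.orderEmbOfFin hA.symm ((I.orderIsoOfFin hA.symm).symm ⟨y, hy⟩) = y :=
      emb_iso_symm I hA y hy
    set v := (I.orderIsoOfFin hA.symm).symm ⟨y, hy⟩ with hv
    rcases lt_trichotomy v (G v) with h | h | h
    · exact Finset.mem_union_left _ (Finset.mem_image.mpr
        ⟨v, mem_EminF.mpr h, hyemb⟩)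
    · exact absurd h.symm (hG.2 v)
    · refine Finset.mem_union_right _ (Finset.mem_image.mpr
        ⟨I.orderEmbOfFin hA.symm (G v), Finset.mem_image.mpr ⟨G v, ?_, rfl⟩, ?_⟩)
      · rw [mem_EminF, hG.1]
        exact h
      · rw [glueP_emb, hG.1, hyemb]

/-! ### the main combinatorial identity -/

set_option maxHeartbeats 1000000 in
theorem heart {R : Type*} [CommRing R] (k : ℕ) (M N : Matrix (Fin (2*k)) (Fin (2*k)) R) :
    pfaffian (M + N) = ∑ I ∈ Finset.univ.filter
        (fun I : Finset (Fin (2*k)) => Even I.card),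
      (-1 : R) ^ ((∑ i ∈ I, (i.1 + 1)) + I.card / 2) * subPfaff M I * subPfaff N Iᶜ := by
  classical
  rw [pfaffian_eq_pfS, pfS_eq_pairings]
  have hexp : ∀ F ∈ Finset.univ.filter (fun F : Fin (2*k) → Fin (2*k) => IsPairing F),
      ((Equiv.Perm.sign (toCanonPerm k F) : ℤ) : R) *
        ∏ x ∈ EminF F, (M + N) (id x) (id (F x))
      = ∑ T ∈ (EminF F).powerset,
          ((Equiv.Perm.sign (toCanonPerm k F) : ℤ) : R) *
            ((∏ x ∈ T, M x (F x)) * ∏ x ∈ EminF F \ T, N x (F x)) := by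
    intro F _
    simp only [Matrix.add_apply, id_eq]
    rw [Finset.prod_add, Finset.mul_sum]
  rw [Finset.sum_congr rfl hexp, Finset.sum_sigma']
  have hmaps : ∀ p ∈ (Finset.univ.filter
        (fun F : Fin (2*k) → Fin (2*k) => IsPairing F)).sigma
        (fun F => (EminF F).powerset),
      p.2 ∪ p.2.image p.1 ∈ Finset.univ.filter
        (fun I : Finset (Fin (2*k)) => Even I.card) := by
    intro p hp
    obtain ⟨hp1, hp2⟩ := Finset.mem_sigma.mp hp
    rw [Finset.mem_filter] at hp1 ⊢
    refine ⟨Finset.mem_univ _, ?_⟩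
    rw [card_pairT hp1.2 (Finset.mem_powerset.mp hp2)]
    exact even_two_mul _
  rw [← Finset.sum_fiberwise_of_maps_to hmaps]
  refine Finset.sum_congr rfl ?_
  intro I hI
  rw [Finset.mem_filter] at hI
  obtain ⟨-, hIeven⟩ := hI
  obtain ⟨a, hA⟩ : ∃ a, 2*a = I.card := by
    obtain ⟨r, hr⟩ := hIeven
    exact ⟨r, by omega⟩
  obtain ⟨b, hB⟩ : ∃ b, 2*b = Iᶜ.card := by
    have h := I.card_add_card_compl
    simp only [Fintype.card_fin] at h
    exact ⟨k - a, by omega⟩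
  rw [subPfaff_eq_pfS M I hA, subPfaff_eq_pfS N Iᶜ hB, pfS_eq_pairings, pfS_eq_pairings,
    mul_assoc, Finset.sum_mul_sum, Finset.mul_sum]
  have hsum2 : ∀ G ∈ Finset.univ.filter (fun G : Fin (2*a) → Fin (2*a) => IsPairing G),
      (-1:R) ^ ((∑ i ∈ I, (i.1 + 1)) + I.card / 2) *
        ∑ H ∈ Finset.univ.filter (fun H : Fin (2*b) → Fin (2*b) => IsPairing H),
          (((Equiv.Perm.sign (toCanonPerm a G) : ℤ) : R) *
            ∏ x ∈ EminF G, M (I.orderEmbOfFin hA.symm x) (I.orderEmbOfFin hA.symm (G x))) *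
          (((Equiv.Perm.sign (toCanonPerm b H) : ℤ) : R) *
            ∏ x ∈ EminF H, N (Iᶜ.orderEmbOfFin hB.symm x) (Iᶜ.orderEmbOfFin hB.symm (H x)))
      = ∑ H ∈ Finset.univ.filter (fun H : Fin (2*b) → Fin (2*b) => IsPairing H),
          (-1:R) ^ ((∑ i ∈ I, (i.1 + 1)) + I.card / 2) *
          ((((Equiv.Perm.sign (toCanonPerm a G) : ℤ) : R) *
            ∏ x ∈ EminF G, M (I.orderEmbOfFin hA.symm x) (I.orderEmbOfFin hA.symm (G x))) *
          (((Equiv.Perm.sign (toCanonPerm b H) : ℤ) : R) *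
            ∏ x ∈ EminF H, N (Iᶜ.orderEmbOfFin hB.symm x) (Iᶜ.orderEmbOfFin hB.symm (H x)))) := by
    intro G _
    rw [Finset.mul_sum]
  rw [Finset.sum_congr rfl hsum2, ← Finset.sum_product']
  -- now a bijection between the fiber over `I` and pairs of pairings
  refine Finset.sum_bij'
    (fun p _ => (conjP I hA p.1, conjP Iᶜ hB p.1))
    (fun q _ => ⟨glueP I hA hB q.1 q.2, (EminF q.1).image (I.orderEmbOfFin hA.symm)⟩)
    ?_ ?_ ?_ ?_ ?_
  · -- maps into pairs of pairings
    intro p hp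
    obtain ⟨hps, hpI⟩ := Finset.mem_filter.mp hp
    obtain ⟨hp1, hp2⟩ := Finset.mem_sigma.mp hps
    have hF : IsPairing p.1 := (Finset.mem_filter.mp hp1).2
    have hFI : ∀ x ∈ I, p.1 x ∈ I := stable_of_union hF hpI
    rw [Finset.mem_product, Finset.mem_filter, Finset.mem_filter]
    exact ⟨⟨Finset.mem_univ _, isPairing_conjP I hA hF hFI⟩,
      ⟨Finset.mem_univ _, isPairing_conjP Iᶜ hB hF (compl_stable I hF hFI)⟩⟩
  · -- reverse map lands in the fiber
    intro q hq
    rw [Finset.mem_product, Finset.mem_filter, Finset.mem_filter] at hq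
    obtain ⟨⟨-, hG⟩, ⟨-, hH⟩⟩ := hq
    rw [Finset.mem_filter, Finset.mem_sigma]
    refine ⟨⟨?_, ?_⟩, ?_⟩
    · rw [Finset.mem_filter]
      exact ⟨Finset.mem_univ _, isPairing_glueP I hA hB hG hH⟩
    · exact Finset.mem_powerset.mpr (glue_T_subset I hA hB)
    · exact glue_T_union I hA hB hG
  · -- left inverse
    intro p hp
    obtain ⟨hps, hpI⟩ := Finset.mem_filter.mp hp
    obtain ⟨hp1, hp2⟩ := Finset.mem_sigma.mp hps
    have hF : IsPairing p.1 := (Finset.mem_filter.mp hp1).2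
    have hFI : ∀ x ∈ I, p.1 x ∈ I := stable_of_union hF hpI
    have e1 : glueP I hA hB (conjP I hA p.1) (conjP Iᶜ hB p.1) = p.1 :=
      glueP_conjP I hA hB hF hFI
    have e2 : (EminF (conjP I hA p.1)).image (I.orderEmbOfFin hA.symm) = p.2 := by
      rw [image_emb_EminF I hA hFI,
        ← T_eq_inter hF (Finset.mem_powerset.mp hp2) hpI]
    obtain ⟨F, T⟩ := p
    simp only at e1 e2
    dsimp only
    rw [e1, e2]
  · -- right inverse
    intro q hq
    rw [Finset.mem_product, Finset.mem_filter, Finset.mem_filter] at hq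
    obtain ⟨⟨-, hG⟩, ⟨-, hH⟩⟩ := hq
    have e1 : conjP I hA (glueP I hA hB q.1 q.2) = q.1 :=
      conjP_glueP I hA hB (fun x hx => glueP_mem I hA hB hx)
    have e2 : conjP Iᶜ hB (glueP I hA hB q.1 q.2) = q.2 :=
      conjP_glueP_compl I hA hB (fun x hx => glueP_not_mem I hA hB (Finset.mem_compl.mp hx))
    obtain ⟨G, H⟩ := q
    simp only at e1 e2 ⊢
    rw [e1, e2]
  · -- matching terms
    intro p hp
    dsimp only
    obtain ⟨hps, hpI⟩ := Finset.mem_filter.mp hp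
    obtain ⟨hp1, hp2⟩ := Finset.mem_sigma.mp hps
    have hF : IsPairing p.1 := (Finset.mem_filter.mp hp1).2
    have hT : p.2 ⊆ EminF p.1 := Finset.mem_powerset.mp hp2
    have hFI : ∀ x ∈ I, p.1 x ∈ I := stable_of_union hF hpI
    have hFIc : ∀ x ∈ Iᶜ, p.1 x ∈ Iᶜ := compl_stable I hF hFI
    have hG : IsPairing (conjP I hA p.1) := isPairing_conjP I hA hF hFI
    have hH : IsPairing (conjP Iᶜ hB p.1) := isPairing_conjP Iᶜ hB hF hFIc
    have hglue : glueP I hA hB (conjP I hA p.1) (conjP Iᶜ hB p.1) = p.1 :=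
      glueP_conjP I hA hB hF hFI
    -- sign identity
    have hsign : Equiv.Perm.sign (toCanonPerm k p.1) =
        Equiv.Perm.sign (wPerm I) * Equiv.Perm.sign (toCanonPerm a (conjP I hA p.1)) *
          Equiv.Perm.sign (toCanonPerm b (conjP Iᶜ hB p.1)) := by
      conv_lhs => rw [← hglue]
      exact sign_glueP I hA hB _ _ hG hH
    -- first product
    have hP1 : ∏ x ∈ p.2, M x (p.1 x) = ∏ x ∈ EminF (conjP I hA p.1),
        M (I.orderEmbOfFin hA.symm x) (I.orderEmbOfFin hA.symm (conjP I hA p.1 x)) := by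
      have hTeq : p.2 = (EminF (conjP I hA p.1)).image (I.orderEmbOfFin hA.symm) := by
        rw [image_emb_EminF I hA hFI, ← T_eq_inter hF hT hpI]
      rw [hTeq, Finset.prod_image (fun x _ y _ h => (I.orderEmbOfFin hA.symm).injective h)]
      refine Finset.prod_congr rfl fun x _ => ?_
      rw [conjP_emb I hA hFI]
    -- second product
    have hTc : EminF p.1 \ p.2 = (EminF (conjP Iᶜ hB p.1)).image (Iᶜ.orderEmbOfFin hB.symm) := by
      rw [image_emb_EminF Iᶜ hB hFIc]
      have hTeq := T_eq_inter hF hT hpI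
      ext x
      simp only [Finset.mem_sdiff, Finset.mem_inter, Finset.mem_compl, hTeq]
      tauto
    have hP2 : ∏ x ∈ EminF p.1 \ p.2, N x (p.1 x) = ∏ x ∈ EminF (conjP Iᶜ hB p.1),
        N (Iᶜ.orderEmbOfFin hB.symm x) (Iᶜ.orderEmbOfFin hB.symm (conjP Iᶜ hB p.1 x)) := by
      rw [hTc, Finset.prod_image (fun x _ y _ h => (Iᶜ.orderEmbOfFin hB.symm).injective h)]
      refine Finset.prod_congr rfl fun x _ => ?_
      rw [conjP_emb Iᶜ hB hFIc]
    -- put it together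
    rw [hsign, hP1, hP2, sign_wPerm I]
    have hcast : ((((-1 : ℤˣ) ^ (∑ i ∈ I, i.1 + I.card * (I.card - 1) / 2) *
        Equiv.Perm.sign (toCanonPerm a (conjP I hA p.1)) *
        Equiv.Perm.sign (toCanonPerm b (conjP Iᶜ hB p.1)) : ℤˣ) : ℤ) : R)
        = (-1:R) ^ (∑ i ∈ I, i.1 + I.card * (I.card - 1) / 2) *
          ((Equiv.Perm.sign (toCanonPerm a (conjP I hA p.1)) : ℤ) : R) *
          ((Equiv.Perm.sign (toCanonPerm b (conjP Iᶜ hB p.1)) : ℤ) : R) := by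
      push_cast
      ring
    rw [hcast]
    have hpow : (-1:R) ^ (∑ i ∈ I, i.1 + I.card * (I.card - 1) / 2)
        = (-1:R) ^ ((∑ i ∈ I, (i.1 + 1)) + I.card / 2) := by
      apply neg_one_pow_congr'
      have hs : ∑ i ∈ I, (i.1 + 1) = (∑ i ∈ I, i.1) + I.card := by
        rw [Finset.sum_add_distrib, Finset.sum_const, smul_eq_mul, mul_one]
      have h1 : I.card * (I.card - 1) / 2 = a * (2*a - 1) := by
        rw [← hA, show 2*a*(2*a-1) = 2*(a*(2*a-1)) from by ring,
          Nat.mul_div_cancel_left _ (by norm_num)]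
      have h2 : a * (2*a - 1) + a = 2*(a*a) := by
        rcases a with _ | a'
        · simp
        · simp only [show 2*(a'+1) - 1 = 2*a'+1 from by omega]
          ring
      rw [hs, h1, ← hA]
      omega
    rw [hpow]
    ring

theorem heart_final (R : Type*) [CommRing R] (m : ℕ)
    (z y : Matrix (Fin (2*m)) (Fin (2*m)) R) :
    pfaffian (z + y) =
      ∑ I ∈ Finset.univ.filter (fun I : Finset (Fin (2*m)) => Even I.card),
        (-1 : R) ^ ((∑ i ∈ I, (i.1 + 1)) + I.card / 2) * subPfaff z I * subPfaff y Iᶜ :=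
  heart m z y
/-- For `n` even and skew-symmetric `n × n` matrices `z`, `y`,
`Pfaff(z + y) = Σ_{I ⊆ {1,…,n}, |I| even} sgn(I) ⋅ Pfaff_I(z) ⋅ Pfaff_{I^C}(y)`,
where (in 1-based indexing) `sgn(I) = (-1)^{Σ_{i ∈ I} i + |I|/2}`. -/
theorem pfaffian_add_eq_sum_subPfaff (R : Type*) [CommRing R] (n : ℕ) (hn : Even n)
    (z y : Matrix (Fin n) (Fin n) R) (hz : zᵀ = -z) (hy : yᵀ = -y) :
    pfaffian (z + y) =
      ∑ I ∈ Finset.univ.filter (fun I : Finset (Fin n) => Even I.card),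
        (-1 : R) ^ ((∑ i ∈ I, (i.1 + 1)) + I.card / 2) * subPfaff z I * subPfaff y Iᶜ := by
  obtain ⟨m, hm⟩ := hn
  have h2 : n = 2 * m := by omega
  subst h2
  exact heart m z y
end

section
/- Let z be an n × n skew-symmetric matrix over a commutative ring and let z̃ be the n × n matrix with entries z̃_{ij} = (-1)^{i+j+1} z_{ij}. Then z̃ is skew-symmetric, and for every subset I ⊆ {1,…,n} of even cardinality, Pfaff_I(z̃) = sgn(I) · Pfaff_I(z). -/
open Matrix Finset

variable {R : Type*} [CommRing R]

lemma eoEquiv_aux {k : ℕ} {M : Type*} [AddCommMonoid M] (h : Fin (2*k) → M) :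
    ∑ r : Fin k, (h (evenPos k r) + h (oddPos k r)) = ∑ a, h a := by
  let e : Fin k × Fin 2 ≃ Fin (2 * k) :=
  { toFun := fun p => ⟨2 * p.1.1 + p.2.1, by have := p.1.2; have := p.2.2; omega⟩
    invFun := fun a => (⟨a.1 / 2, by have := a.2; omega⟩, ⟨a.1 % 2, by omega⟩)
    left_inv := by rintro ⟨⟨r,hr⟩,⟨i,hi⟩⟩; simp only [Prod.mk.injEq, Fin.mk.injEq]; omega
    right_inv := by rintro ⟨a,ha⟩; simp only [Fin.mk.injEq]; omega }
  rw [← Equiv.sum_comp e h, Fintype.sum_prod_type]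
  refine Finset.sum_congr rfl fun r _ => ?_
  rw [Fin.sum_univ_two]
  congr 1

lemma sum_orderIso_aux {n : ℕ} (I : Finset (Fin n)) (F : Fin n → ℕ) :
    ∑ b : Fin I.card, F ((I.orderIsoOfFin rfl) b : Fin n) = ∑ i ∈ I, F i := by
  rw [← Finset.sum_coe_sort I F,
    ← Equiv.sum_comp (I.orderIsoOfFin rfl).toEquiv (fun i : ↥I => F i)]
  rfl

/-- If `z` is skew-symmetric and `z̃` has entries
`z̃_{ij} = (-1)^{i+j+1} z_{ij}` (1-based indexing; the parity is the same in 0-based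
indexing), then `z̃` is skew-symmetric and for every even subset `I`,
`Pfaff_I(z̃) = sgn(I) ⋅ Pfaff_I(z)` where `sgn(I) = (-1)^{Σ_{i ∈ I} i + |I|/2}`
(1-based). -/
theorem subPfaff_tilde (R : Type*) [CommRing R] (n : ℕ)
    (z zt : Matrix (Fin n) (Fin n) R) (hz : zᵀ = -z)
    (hzt : ∀ i j, zt i j = (-1) ^ (i.1 + j.1 + 1) * z i j) :
    ztᵀ = -zt ∧
    ∀ I : Finset (Fin n), Even I.card →
      subPfaff zt I = (-1 : R) ^ ((∑ i ∈ I, (i.1 + 1)) + I.card / 2) * subPfaff z I := by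
  have hz' : ∀ i j, z j i = - z i j := fun i j => by
    have := congrFun (congrFun hz i) j
    simpa [Matrix.transpose_apply, Matrix.neg_apply] using this
  constructor
  · ext i j
    rw [Matrix.transpose_apply, Matrix.neg_apply, hzt, hzt, hz' i j, add_comm j.1 i.1]
    ring
  · intro I hI
    have hc : 2 * (I.card / 2) = I.card := by obtain ⟨m, hm⟩ := hI; omega
    set k := I.card / 2 with hkdef
    simp only [subPfaff, pfaffian, dif_pos hI, pfaffianAux, Finset.mul_sum]
    refine Finset.sum_congr rfl fun σ hσ => ?_
    set S : ℕ := ∑ i ∈ I, i.1 with hS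
    have hpow : ((-1:R)) ^ ((∑ i ∈ I, (i.1+1)) + I.card/2) = (-1) ^ (S + k) := by
      have h1 : ∑ i ∈ I, (i.1+1) = S + I.card := by
        rw [Finset.sum_add_distrib]; simp [hS]
      rw [h1, ← hkdef, pow_add, pow_add, pow_add, Even.neg_one_pow hI]
      ring
    rw [hpow]
    set F : Fin (2 * k) → ℕ :=
      fun a => ((I.orderIsoOfFin rfl) (Fin.cast hc a) : Fin n).1 with hF
    have hsum : ∑ r : Fin k, (F (σ (evenPos k r)) + F (σ (oddPos k r)) + 1) = S + k := by
      rw [Finset.sum_add_distrib, eoEquiv_aux (fun a => F (σ a)),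
        Equiv.sum_comp σ F]
      have : ∑ a : Fin (2 * k), F a = S := by
        have h2 : ∑ a : Fin (2 * k), F a
            = ∑ b : Fin I.card, ((I.orderIsoOfFin rfl) b : Fin n).1 :=
          Equiv.sum_comp (finCongr hc) (fun b => ((I.orderIsoOfFin rfl) b : Fin n).1)
        rw [h2, hS]
        exact sum_orderIso_aux I (fun i => i.1)
      simp [this, mul_comm]
      exact this
    have key : ∏ r : Fin k,
        zt ((I.orderIsoOfFin rfl) (Fin.cast hc (σ (evenPos k r))) : Fin n)
           ((I.orderIsoOfFin rfl) (Fin.cast hc (σ (oddPos k r))) : Fin n)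
        = (-1:R) ^ (S + k) * ∏ r : Fin k,
        z ((I.orderIsoOfFin rfl) (Fin.cast hc (σ (evenPos k r))) : Fin n)
          ((I.orderIsoOfFin rfl) (Fin.cast hc (σ (oddPos k r))) : Fin n) := by
      simp only [hzt]
      rw [Finset.prod_mul_distrib, Finset.prod_pow_eq_pow_sum]
      congr 1
      rw [← hsum]
    simp only [Matrix.of_apply]
    rw [key]
    ring
end

section
/- Let z be an n × n skew-symmetric matrix over a commutative ring, let π be a permutation of {1,…,n}, and let π(z) be the matrix with entries (π(z))_{π(i),π(j)} = z_{ij}. Then for every subset J ⊆ {1,…,n} of even cardinality, Pfaff_{π(J)}(π(z)) = sgn(π|_J) · Pfaff_J(z), where sgn(π|_J) is the sign of the permutation induced by π from the increasing enumeration of J to the increasing enumeration of π(J). -/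
open Matrix Finset

variable {R : Type*} [CommRing R]

namespace PfAux

variable {k : ℕ}

def sw (k : ℕ) (x : Fin (2 * k)) : Fin (2 * k) :=
  ⟨2 * (x.1 / 2) + (1 - x.1 % 2), by have := x.2; omega⟩

lemma sw_invol (k : ℕ) : Function.Involutive (sw k) := by
  intro x
  have hx := x.2
  apply Fin.ext
  show 2 * ((2 * (x.1 / 2) + (1 - x.1 % 2)) / 2) + (1 - (2 * (x.1 / 2) + (1 - x.1 % 2)) % 2) = x.1
  omega

def pairSwap (k : ℕ) : Equiv.Perm (Fin (2 * k)) := (sw_invol k).toPerm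

lemma pairSwap_pairSwap (x : Fin (2 * k)) : pairSwap k (pairSwap k x) = x := sw_invol k x

lemma pairSwap_evenPos (r : Fin k) : pairSwap k (evenPos k r) = oddPos k r := by
  apply Fin.ext
  show 2 * ((2 * r.1) / 2) + (1 - (2 * r.1) % 2) = 2 * r.1 + 1
  omega

lemma pairSwap_oddPos (r : Fin k) : pairSwap k (oddPos k r) = evenPos k r := by
  apply Fin.ext
  show 2 * ((2 * r.1 + 1) / 2) + (1 - (2 * r.1 + 1) % 2) = 2 * r.1
  omega

lemma pairSwap_ne (x : Fin (2 * k)) : pairSwap k x ≠ x := by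
  intro h
  have hv : 2 * (x.1 / 2) + (1 - x.1 % 2) = x.1 := congrArg Fin.val h
  have hx := x.2
  omega

lemma exists_evenOdd (x : Fin (2 * k)) : ∃ r : Fin k, x = evenPos k r ∨ x = oddPos k r := by
  refine ⟨⟨x.1 / 2, by have := x.2; omega⟩, ?_⟩
  rcases Nat.mod_two_eq_zero_or_one x.1 with h | h
  · left; apply Fin.ext; show x.1 = 2 * (x.1 / 2); omega
  · right; apply Fin.ext; show x.1 = 2 * (x.1 / 2) + 1; omega

def pairEquiv (k : ℕ) : (Fin k × Fin 2) ≃ Fin (2 * k) where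
  toFun p := ⟨2 * p.1.1 + p.2.1, by have := p.1.2; have := p.2.2; omega⟩
  invFun x := (⟨x.1 / 2, by have := x.2; omega⟩, ⟨x.1 % 2, by omega⟩)
  left_inv p := by
    have := p.2.2
    refine Prod.ext (Fin.ext ?_) (Fin.ext ?_) <;> simp <;> omega
  right_inv x := by apply Fin.ext; simp; omega

lemma pairEquiv_zero (r : Fin k) : pairEquiv k (r, 0) = evenPos k r := by
  apply Fin.ext; show 2 * r.1 + 0 = 2 * r.1; omega

lemma pairEquiv_one (r : Fin k) : pairEquiv k (r, 1) = oddPos k r := by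
  apply Fin.ext; show 2 * r.1 + 1 = 2 * r.1 + 1; rfl

variable {R : Type*} [CommRing R]

lemma G_eq (z : Matrix (Fin (2 * k)) (Fin (2 * k)) R)
    (hz : ∀ i j, z j i = -z i j) (σ₁ σ₂ : Equiv.Perm (Fin (2 * k)))
    (hconj : σ₁ * pairSwap k * σ₁⁻¹ = σ₂ * pairSwap k * σ₂⁻¹) :
    ((Equiv.Perm.sign σ₁ : ℤ) : R) * ∏ r : Fin k, z (σ₁ (evenPos k r)) (σ₁ (oddPos k r)) =
    ((Equiv.Perm.sign σ₂ : ℤ) : R) * ∏ r : Fin k, z (σ₂ (evenPos k r)) (σ₂ (oddPos k r)) := by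
  set h : Equiv.Perm (Fin (2 * k)) := σ₁⁻¹ * σ₂ with hh
  have hσ₂ : σ₂ = σ₁ * h := by rw [hh]; group
  have key : pairSwap k * h = h * pairSwap k := by
    calc pairSwap k * h = σ₁⁻¹ * (σ₁ * pairSwap k * σ₁⁻¹) * σ₂ := by rw [hh]; group
    _ = σ₁⁻¹ * (σ₂ * pairSwap k * σ₂⁻¹) * σ₂ := by rw [hconj]
    _ = h * pairSwap k := by rw [hh]; group
  have hpt : ∀ x, h (pairSwap k x) = pairSwap k (h x) := by
    intro x
    have := congrArg (fun μ : Equiv.Perm (Fin (2 * k)) => μ x) key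
    simpa [Equiv.Perm.mul_apply] using this.symm
  -- the induced permutation on pairs
  have hbound : ∀ r : Fin k, (h (evenPos k r)).1 / 2 < k := by
    intro r; have := (h (evenPos k r)).2; omega
  set τf : Fin k → Fin k := fun r => ⟨(h (evenPos k r)).1 / 2, hbound r⟩ with hτf
  have hhe : ∀ r : Fin k, h (evenPos k r) = evenPos k (τf r) ∨
      h (evenPos k r) = oddPos k (τf r) := by
    intro r
    rcases Nat.mod_two_eq_zero_or_one (h (evenPos k r)).1 with hm | hm
    · left; apply Fin.ext; show (h (evenPos k r)).1 = 2 * ((h (evenPos k r)).1 / 2); omega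
    · right; apply Fin.ext; show (h (evenPos k r)).1 = 2 * ((h (evenPos k r)).1 / 2) + 1; omega
  have hho : ∀ r : Fin k, h (oddPos k r) = pairSwap k (h (evenPos k r)) := by
    intro r; rw [← pairSwap_evenPos, hpt]
  have evenPos_inj : ∀ r s : Fin k, evenPos k r = evenPos k s → r = s := by
    intro r s hrs
    have : 2 * r.1 = 2 * s.1 := congrArg Fin.val hrs
    exact Fin.ext (by omega)
  have hinj : Function.Injective τf := by
    intro r s hrs
    by_contra hne
    rcases hhe r with e1 | e1 <;> rcases hhe s with e2 | e2
    · exact hne (evenPos_inj r s (h.injective (by rw [e1, e2, hrs])))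
    · -- h (E r) = E m, h (E s) = O m ⇒ h (O r) = O m = h (E s) ⇒ O r = E s, impossible
      have : h (oddPos k r) = h (evenPos k s) := by
        rw [hho r, e1, pairSwap_evenPos, e2, hrs]
      have := congrArg Fin.val (h.injective this)
      simp only [oddPos, evenPos] at this
      omega
    · have : h (oddPos k s) = h (evenPos k r) := by
        rw [hho s, e2, pairSwap_evenPos, e1, hrs]
      have := congrArg Fin.val (h.injective this)
      simp only [oddPos, evenPos] at this
      omega
    · have : oddPos k (τf r) = oddPos k (τf s) := by rw [hrs]
      have := h.injective (e1.trans (this.trans e2.symm))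
      exact hne (evenPos_inj r s this)
  set τ : Equiv.Perm (Fin k) := Equiv.ofBijective τf (Finite.injective_iff_bijective.mp hinj)
    with hτ
  have hτapp : ∀ r, τ r = τf r := fun r => rfl
  set g : Fin k → Equiv.Perm (Fin 2) :=
    fun r => if (h (evenPos k r)).1 % 2 = 1 then Equiv.swap 0 1 else 1 with hg
  set P : Equiv.Perm (Fin k × Fin 2) :=
    (Equiv.prodCongrRight g).trans (Equiv.prodCongrLeft fun _ : Fin 2 => τ) with hP
  have hPapp : ∀ y : Fin k × Fin 2, P y = (τ y.1, g y.1 y.2) := by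
    intro y; rfl
  have hPe : ∀ y : Fin k × Fin 2, h (pairEquiv k y) = pairEquiv k (P y) := by
    rintro ⟨r, b⟩
    rcases Nat.mod_two_eq_zero_or_one (h (evenPos k r)).1 with hm | hm
    · have he : h (evenPos k r) = evenPos k (τf r) := by
        rcases hhe r with e | e
        · exact e
        · exfalso; rw [e] at hm; simp only [oddPos] at hm; omega
      have hgr : g r = 1 := by rw [hg]; simp [hm]
      rcases (by omega : b = 0 ∨ b = 1) with rfl | rfl
      · rw [pairEquiv_zero, hPapp]
        simp only [hgr, Equiv.Perm.one_apply]
        rw [pairEquiv_zero, he, hτapp]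
      · rw [pairEquiv_one, hPapp]
        simp only [hgr, Equiv.Perm.one_apply]
        rw [pairEquiv_one, hho, he, pairSwap_evenPos, hτapp]
    · have he : h (evenPos k r) = oddPos k (τf r) := by
        rcases hhe r with e | e
        · exfalso; rw [e] at hm; simp only [evenPos] at hm; omega
        · exact e
      have hgr : g r = Equiv.swap 0 1 := by rw [hg]; simp [hm]
      rcases (by omega : b = 0 ∨ b = 1) with rfl | rfl
      · rw [pairEquiv_zero, hPapp]
        simp only [hgr, Equiv.swap_apply_left]
        rw [pairEquiv_one, he, hτapp]
      · rw [pairEquiv_one, hPapp]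
        simp only [hgr, Equiv.swap_apply_right]
        rw [pairEquiv_zero, hho, he, pairSwap_oddPos, hτapp]
  have hPerm : h = (pairEquiv k).permCongr P := by
    apply Equiv.ext
    intro x
    obtain ⟨y, rfl⟩ : ∃ y, pairEquiv k y = x := ⟨(pairEquiv k).symm x, Equiv.apply_symm_apply _ _⟩
    rw [hPe]
    simp [Equiv.permCongr_apply]
  have hsignh : Equiv.Perm.sign h =
      ∏ r : Fin k, (if (h (evenPos k r)).1 % 2 = 1 then (-1 : ℤˣ) else 1) := by
    have e1 : Equiv.Perm.sign h = Equiv.Perm.sign P := by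
      rw [hPerm, Equiv.Perm.sign_permCongr]
    have e2 : P = (Equiv.prodCongrLeft fun _ : Fin 2 => τ) * (Equiv.prodCongrRight g) := rfl
    have h1 : (∏ _b : Fin 2, Equiv.Perm.sign τ) = 1 := by
      rw [Finset.prod_const]
      show Equiv.Perm.sign τ ^ (Fintype.card (Fin 2)) = 1
      rw [Fintype.card_fin]
      exact Int.units_sq _
    rw [e1, e2, _root_.map_mul, Equiv.Perm.sign_prodCongrLeft,
      Equiv.Perm.sign_prodCongrRight, h1, one_mul]
    apply Finset.prod_congr rfl
    intro r _
    show Equiv.Perm.sign (if (h (evenPos k r)).1 % 2 = 1 then Equiv.swap 0 1 else 1) = _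
    split_ifs with hm
    · rw [Equiv.Perm.sign_swap (by decide : (0 : Fin 2) ≠ 1)]
    · rw [_root_.map_one]
  have step : ∀ r : Fin k, z (σ₂ (evenPos k r)) (σ₂ (oddPos k r)) =
      (if (h (evenPos k r)).1 % 2 = 1 then (-1 : R) else 1) *
        z (σ₁ (evenPos k (τf r))) (σ₁ (oddPos k (τf r))) := by
    intro r
    have e2 : ∀ x, σ₂ x = σ₁ (h x) := by intro x; rw [hσ₂]; rfl
    rw [e2, e2, hho r]
    rcases Nat.mod_two_eq_zero_or_one (h (evenPos k r)).1 with hm | hm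
    · have he : h (evenPos k r) = evenPos k (τf r) := by
        rcases hhe r with e | e
        · exact e
        · exfalso; rw [e] at hm; simp only [oddPos] at hm; omega
      rw [if_neg (by omega), one_mul, he, pairSwap_evenPos]
    · have he : h (evenPos k r) = oddPos k (τf r) := by
        rcases hhe r with e | e
        · exfalso; rw [e] at hm; simp only [evenPos] at hm; omega
        · exact e
      rw [if_pos hm, he, pairSwap_oddPos, hz]; ring
  have hprod : ∏ r : Fin k, z (σ₂ (evenPos k r)) (σ₂ (oddPos k r)) =
      (∏ r : Fin k, (if (h (evenPos k r)).1 % 2 = 1 then (-1 : R) else 1)) *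
        ∏ r : Fin k, z (σ₁ (evenPos k r)) (σ₁ (oddPos k r)) := by
    rw [Finset.prod_congr rfl fun r _ => step r, Finset.prod_mul_distrib]
    congr 1
    exact Equiv.prod_comp τ fun m => z (σ₁ (evenPos k m)) (σ₁ (oddPos k m))
  have hsign2 : ((Equiv.Perm.sign σ₂ : ℤ) : R) =
      ((Equiv.Perm.sign σ₁ : ℤ) : R) *
        ∏ r : Fin k, (if (h (evenPos k r)).1 % 2 = 1 then (-1 : R) else 1) := by
    rw [hσ₂, _root_.map_mul, hsignh, Units.val_mul, Int.cast_mul]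
    congr 1
    have e : ((∏ r : Fin k, (if (h (evenPos k r)).1 % 2 = 1 then (-1 : ℤˣ) else 1) : ℤˣ) : ℤ) =
        (Units.coeHom ℤ) (∏ r : Fin k, (if (h (evenPos k r)).1 % 2 = 1 then (-1 : ℤˣ) else 1)) :=
      rfl
    rw [e, map_prod, Int.cast_prod]
    apply Finset.prod_congr rfl
    intro r _
    split_ifs <;> simp
  have sq : (∏ r : Fin k, (if (h (evenPos k r)).1 % 2 = 1 then (-1 : R) else 1)) *
      (∏ r : Fin k, (if (h (evenPos k r)).1 % 2 = 1 then (-1 : R) else 1)) = 1 := by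
    rw [← Finset.prod_mul_distrib]
    apply Finset.prod_eq_one
    intro r _
    split_ifs <;> ring
  rw [hprod, hsign2]
  linear_combination (-(((Equiv.Perm.sign σ₁ : ℤ) : R)) *
    ∏ r : Fin k, z (σ₁ (evenPos k r)) (σ₁ (oddPos k r))) * sq

section Canon

variable (f : Equiv.Perm (Fin (2 * k)))

def mins (f : Equiv.Perm (Fin (2 * k))) : Finset (Fin (2 * k)) :=
  Finset.univ.filter fun x => x < f x

lemma mins_card (hf1 : ∀ x, f (f x) = x) (hf2 : ∀ x, f x ≠ x) : (mins f).card = k := by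
  classical
  have hneg : (Finset.univ.filter fun x : Fin (2 * k) => ¬x < f x) =
      Finset.univ.filter fun x => f x < x := by
    apply Finset.filter_congr
    intro x _
    simp only [not_lt]
    constructor
    · intro h'; exact lt_of_le_of_ne h' (hf2 x)
    · intro h'; exact le_of_lt h'
  have hsplit := Finset.card_filter_add_card_filter_not
    (s := (Finset.univ : Finset (Fin (2 * k)))) (p := fun x => x < f x)
  rw [hneg, Finset.card_univ, Fintype.card_fin] at hsplit
  have hbij : (Finset.univ.filter fun x : Fin (2 * k) => f x < x).card = (mins f).card := by
    apply Finset.card_bij (fun x _ => f x)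
    · intro a ha
      simp only [mins, Finset.mem_filter, Finset.mem_univ, true_and] at *
      rw [hf1]; exact ha
    · intro a _ b _ hab; exact f.injective hab
    · intro b hb
      refine ⟨f b, ?_, hf1 b⟩
      simp only [mins, Finset.mem_filter, Finset.mem_univ, true_and] at *
      rw [hf1]; exact hb
  rw [show (Finset.univ.filter fun x : Fin (2 * k) => x < f x) = mins f from rfl] at hsplit
  omega

def canonFun (hc : (mins f).card = k) : Fin (2 * k) → Fin (2 * k) := fun x =>
  if x.1 % 2 = 0 then (mins f).orderEmbOfFin hc ⟨x.1 / 2, by have := x.2; omega⟩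
  else f ((mins f).orderEmbOfFin hc ⟨x.1 / 2, by have := x.2; omega⟩)

lemma canonFun_even (hc : (mins f).card = k) (r : Fin k) :
    canonFun f hc (evenPos k r) = (mins f).orderEmbOfFin hc r := by
  unfold canonFun evenPos
  rw [if_pos (by simp only [Fin.val_mk]; omega)]
  congr 1
  apply Fin.ext
  simp only [Fin.val_mk]
  omega

lemma canonFun_odd (hc : (mins f).card = k) (r : Fin k) :
    canonFun f hc (oddPos k r) = f ((mins f).orderEmbOfFin hc r) := by
  unfold canonFun oddPos
  rw [if_neg (by simp only [Fin.val_mk]; omega)]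
  congr 2
  apply Fin.ext
  simp only [Fin.val_mk]
  omega

lemma mem_mins_lt {f : Equiv.Perm (Fin (2 * k))} {x : Fin (2 * k)} (hx : x ∈ mins f) :
    x < f x := (Finset.mem_filter.mp hx).2

lemma canonFun_bij (hf1 : ∀ x, f (f x) = x) (hf2 : ∀ x, f x ≠ x) :
    Function.Bijective (canonFun f (mins_card f hf1 hf2)) := by
  rw [← Finite.injective_iff_bijective]
  set hc := mins_card f hf1 hf2
  intro x y hxy
  have hmm : ∀ r : Fin k, (mins f).orderEmbOfFin hc r ∈ mins f := fun r =>
    Finset.orderEmbOfFin_mem (mins f) hc r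
  have hcontra : ∀ r s : Fin k,
      (mins f).orderEmbOfFin hc r = f ((mins f).orderEmbOfFin hc s) → False := by
    intro r s hrs
    have h1 := mem_mins_lt (hmm r)
    have h2 := mem_mins_lt (hmm s)
    rw [hrs, hf1] at h1
    exact (lt_asymm h1) h2
  obtain ⟨r, hr | hr⟩ := exists_evenOdd x <;> obtain ⟨s', hs | hs⟩ := exists_evenOdd y <;>
    subst hr hs
  · rw [canonFun_even, canonFun_even] at hxy
    rw [((mins f).orderEmbOfFin hc).injective hxy]
  · exact absurd (by rw [canonFun_even, canonFun_odd] at hxy; exact hxy) (fun h => hcontra _ _ h)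
  · exact absurd (by rw [canonFun_even, canonFun_odd] at hxy; exact hxy.symm)
      (fun h => hcontra _ _ h)
  · rw [canonFun_odd, canonFun_odd] at hxy
    rw [((mins f).orderEmbOfFin hc).injective (f.injective hxy)]

noncomputable def canonPerm (hf1 : ∀ x, f (f x) = x) (hf2 : ∀ x, f x ≠ x) : Equiv.Perm (Fin (2 * k)) :=
  Equiv.ofBijective (canonFun f (mins_card f hf1 hf2)) (canonFun_bij f hf1 hf2)

lemma canonPerm_even (hf1 : ∀ x, f (f x) = x) (hf2 : ∀ x, f x ≠ x) (r : Fin k) :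
    canonPerm f hf1 hf2 (evenPos k r) = (mins f).orderEmbOfFin (mins_card f hf1 hf2) r :=
  canonFun_even f _ r

lemma canonPerm_odd (hf1 : ∀ x, f (f x) = x) (hf2 : ∀ x, f x ≠ x) (r : Fin k) :
    canonPerm f hf1 hf2 (oddPos k r) = f ((mins f).orderEmbOfFin (mins_card f hf1 hf2) r) :=
  canonFun_odd f _ r

lemma canonPerm_isCanonical (hf1 : ∀ x, f (f x) = x) (hf2 : ∀ x, f x ≠ x) :
    IsCanonical (canonPerm f hf1 hf2) := by
  constructor
  · intro r
    rw [canonPerm_even, canonPerm_odd]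
    exact mem_mins_lt (Finset.orderEmbOfFin_mem (mins f) _ r)
  · intro r s hrs
    rw [canonPerm_even, canonPerm_even]
    exact ((mins f).orderEmbOfFin _).strictMono hrs

lemma canonPerm_conj (hf1 : ∀ x, f (f x) = x) (hf2 : ∀ x, f x ≠ x) :
    canonPerm f hf1 hf2 * pairSwap k * (canonPerm f hf1 hf2)⁻¹ = f := by
  have hpt : ∀ x, canonPerm f hf1 hf2 (pairSwap k x) = f (canonPerm f hf1 hf2 x) := by
    intro x
    obtain ⟨r, rfl | rfl⟩ := exists_evenOdd x
    · rw [pairSwap_evenPos, canonPerm_odd, canonPerm_even]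
    · rw [pairSwap_oddPos, canonPerm_even, canonPerm_odd, hf1]
  apply Equiv.ext
  intro x
  simp only [Equiv.Perm.mul_apply]
  rw [hpt]
  simp

lemma canonPerm_unique (hf1 : ∀ x, f (f x) = x) (hf2 : ∀ x, f x ≠ x)
    (σ : Equiv.Perm (Fin (2 * k))) (hσ : IsCanonical σ)
    (hconj : σ * pairSwap k * σ⁻¹ = f) : σ = canonPerm f hf1 hf2 := by
  have hpt : ∀ x, σ (pairSwap k x) = f (σ x) := by
    intro x
    have := congrArg (fun μ : Equiv.Perm (Fin (2 * k)) => μ (σ x)) hconj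
    simpa [Equiv.Perm.mul_apply] using this
  have hmem : ∀ r : Fin k, σ (evenPos k r) ∈ mins f := by
    intro r
    apply Finset.mem_filter.mpr
    refine ⟨Finset.mem_univ _, ?_⟩
    rw [← hpt (evenPos k r), pairSwap_evenPos]
    exact hσ.1 r
  have hmono : StrictMono fun r : Fin k => σ (evenPos k r) := fun r s hrs => hσ.2 r s hrs
  have hemb := Finset.orderEmbOfFin_unique (mins_card f hf1 hf2) hmem hmono
  apply Equiv.ext
  intro x
  obtain ⟨r, rfl | rfl⟩ := exists_evenOdd x
  · rw [canonPerm_even, ← congrFun hemb r]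
  · rw [canonPerm_odd, ← congrFun hemb r, ← hpt (evenPos k r), pairSwap_evenPos]

end Canon

lemma conj_invol (μ : Equiv.Perm (Fin (2 * k))) (x : Fin (2 * k)) :
    (μ * pairSwap k * μ⁻¹) ((μ * pairSwap k * μ⁻¹) x) = x := by
  simp only [Equiv.Perm.mul_apply, Equiv.Perm.coe_inv, Equiv.symm_apply_apply, pairSwap_pairSwap,
    Equiv.apply_symm_apply]

lemma conj_ne (μ : Equiv.Perm (Fin (2 * k))) (x : Fin (2 * k)) :
    (μ * pairSwap k * μ⁻¹) x ≠ x := by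
  intro h
  simp only [Equiv.Perm.mul_apply] at h
  exact pairSwap_ne (μ⁻¹ x) (by
    have := congrArg (fun y => μ⁻¹ y) h
    simpa using this)

lemma pfaffianAux_perm (z : Matrix (Fin (2 * k)) (Fin (2 * k)) R)
    (hz : ∀ i j, z j i = -z i j) (ρ : Equiv.Perm (Fin (2 * k))) :
    pfaffianAux k (Matrix.of fun a b => z (ρ a) (ρ b)) =
      ((Equiv.Perm.sign ρ : ℤ) : R) * pfaffianAux k z := by
  classical
  unfold pfaffianAux
  rw [Finset.mul_sum]
  refine Finset.sum_nbij'
    (i := fun σ => canonPerm (ρ * σ * pairSwap k * (ρ * σ)⁻¹) (conj_invol _) (conj_ne _))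
    (j := fun σ => canonPerm (ρ⁻¹ * σ * pairSwap k * (ρ⁻¹ * σ)⁻¹) (conj_invol _) (conj_ne _))
    ?_ ?_ ?_ ?_ ?_
  · intro σ _
    simp only [Finset.mem_filter, Finset.mem_univ, true_and]
    exact canonPerm_isCanonical _ _ _
  · intro σ _
    simp only [Finset.mem_filter, Finset.mem_univ, true_and]
    exact canonPerm_isCanonical _ _ _
  · intro σ hσ
    simp only [Finset.mem_filter, Finset.mem_univ, true_and] at hσ
    symm
    apply canonPerm_unique _ _ _ _ hσ
    have hc := canonPerm_conj (ρ * σ * pairSwap k * (ρ * σ)⁻¹) (conj_invol _) (conj_ne _)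
    set μ := canonPerm (ρ * σ * pairSwap k * (ρ * σ)⁻¹) (conj_invol _) (conj_ne _) with hμ
    calc σ * pairSwap k * σ⁻¹
        = ρ⁻¹ * (ρ * σ * pairSwap k * (ρ * σ)⁻¹) * ρ := by group
      _ = ρ⁻¹ * (μ * pairSwap k * μ⁻¹) * ρ := by rw [hc]
      _ = ρ⁻¹ * μ * pairSwap k * (ρ⁻¹ * μ)⁻¹ := by group
  · intro σ hσ
    simp only [Finset.mem_filter, Finset.mem_univ, true_and] at hσ
    symm
    apply canonPerm_unique _ _ _ _ hσ
    have hc := canonPerm_conj (ρ⁻¹ * σ * pairSwap k * (ρ⁻¹ * σ)⁻¹) (conj_invol _) (conj_ne _)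
    set μ := canonPerm (ρ⁻¹ * σ * pairSwap k * (ρ⁻¹ * σ)⁻¹) (conj_invol _) (conj_ne _) with hμ
    calc σ * pairSwap k * σ⁻¹
        = ρ * (ρ⁻¹ * σ * pairSwap k * (ρ⁻¹ * σ)⁻¹) * ρ⁻¹ := by group
      _ = ρ * (μ * pairSwap k * μ⁻¹) * ρ⁻¹ := by rw [hc]
      _ = ρ * μ * pairSwap k * (ρ * μ)⁻¹ := by group
  · intro σ _
    set μ := canonPerm (ρ * σ * pairSwap k * (ρ * σ)⁻¹) (conj_invol _) (conj_ne _) with hμ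
    have hc := canonPerm_conj (ρ * σ * pairSwap k * (ρ * σ)⁻¹) (conj_invol _) (conj_ne _)
    have hG := G_eq z hz (ρ * σ) μ (by rw [hc])
    have hentry : ∀ r : Fin k,
        (Matrix.of fun a b => z (ρ a) (ρ b)) (σ (evenPos k r)) (σ (oddPos k r)) =
          z ((ρ * σ) (evenPos k r)) ((ρ * σ) (oddPos k r)) := fun r => rfl
    rw [Finset.prod_congr rfl fun r _ => hentry r]
    have hsign : ((Equiv.Perm.sign σ : ℤ) : R) =
        ((Equiv.Perm.sign ρ : ℤ) : R) * ((Equiv.Perm.sign (ρ * σ) : ℤ) : R) := by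
      rw [_root_.map_mul, Units.val_mul, Int.cast_mul, ← mul_assoc]
      rw [show ((Equiv.Perm.sign ρ : ℤ) : R) * ((Equiv.Perm.sign ρ : ℤ) : R) = 1 by
        rcases Int.units_eq_one_or (Equiv.Perm.sign ρ) with h | h <;> rw [h] <;> norm_num]
      rw [one_mul]
    rw [hsign, mul_assoc, hG]

lemma pfaffian_cast {m m' : ℕ} (h : m' = m) (z : Matrix (Fin m) (Fin m) R) :
    pfaffian (Matrix.of fun a b : Fin m' => z (Fin.cast h a) (Fin.cast h b)) = pfaffian z := by
  subst h
  rfl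

lemma pfaffianAux_reindex (c : ℕ) (pf pf' : 2 * (c / 2) = c)
    (w : Matrix (Fin c) (Fin c) R) (hw : ∀ i j, w j i = -w i j) (θ : Equiv.Perm (Fin c)) :
    pfaffianAux (c / 2) (Matrix.of fun a b => w (θ (Fin.cast pf a)) (θ (Fin.cast pf b))) =
      ((Equiv.Perm.sign θ : ℤ) : R) *
        pfaffianAux (c / 2) (Matrix.of fun a b => w (Fin.cast pf' a) (Fin.cast pf' b)) := by
  set ρ : Equiv.Perm (Fin (2 * (c / 2))) := Equiv.permCongr (finCongr pf.symm) θ with hρ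
  have hcast : ∀ a : Fin (2 * (c / 2)), Fin.cast pf' (ρ a) = θ (Fin.cast pf a) := by
    intro a
    apply Fin.ext
    simp [hρ, Equiv.permCongr_apply, Fin.cast]
  have hmat : (Matrix.of fun a b => w (θ (Fin.cast pf a)) (θ (Fin.cast pf b))) =
      Matrix.of fun a b =>
        (Matrix.of fun a b : Fin (2 * (c / 2)) => w (Fin.cast pf' a) (Fin.cast pf' b))
          (ρ a) (ρ b) := by
    ext a b
    simp only [Matrix.of_apply]
    rw [hcast, hcast]
  rw [hmat, pfaffianAux_perm
    (Matrix.of fun a b : Fin (2 * (c / 2)) => w (Fin.cast pf' a) (Fin.cast pf' b))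
    (fun i j => hw _ _) ρ, hρ, Equiv.Perm.sign_permCongr]

end PfAux

open PfAux

/-- Let `z` be skew-symmetric, `π` a permutation of `{1, …, n}`, and
`π(z)` the matrix with `(π(z))_{π(i), π(j)} = z_{ij}`. For every even subset `J`,
`Pfaff_{π(J)}(π(z)) = sgn(π|_J) ⋅ Pfaff_J(z)`, where `π|_J` is the permutation of
`Fin |J|` obtained by composing the increasing enumeration of `J` with `π` and the
inverse of the increasing enumeration of `π(J)`. -/
theorem subPfaff_perm (R : Type*) [CommRing R] (n : ℕ)
    (z : Matrix (Fin n) (Fin n) R) (hz : zᵀ = -z)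
    (π : Equiv.Perm (Fin n)) (J : Finset (Fin n)) (hJ : Even J.card)
    (hcard : (J.image π).card = J.card)
    (τ : Equiv.Perm (Fin J.card))
    (hτ : ∀ a : Fin J.card,
      (((J.image π).orderIsoOfFin hcard (τ a) : Fin n)) = π ((J.orderIsoOfFin rfl a : Fin n))) :
    subPfaff (Matrix.of fun a b => z (π⁻¹ a) (π⁻¹ b)) (J.image π) =
      ((Equiv.Perm.sign τ : ℤ) : R) * subPfaff z J := by
  classical
  have hz' : ∀ i j, z j i = -z i j := by
    intro i j
    have := congrFun (congrFun hz i) j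
    simpa [Matrix.transpose_apply, Matrix.neg_apply] using this
  set embP := (J.image π).orderEmbOfFin hcard with hembP
  set embJ := J.orderEmbOfFin (rfl : J.card = J.card) with hembJ
  have hEnum : ∀ i : Fin (J.image π).card,
      (((J.image π).orderIsoOfFin rfl) i : Fin n) = embP (Fin.cast hcard i) := by
    have hmem : ∀ i : Fin (J.image π).card, embP (Fin.cast hcard i) ∈ J.image π := fun i =>
      Finset.orderEmbOfFin_mem _ _ _
    have hmono : StrictMono fun i : Fin (J.image π).card => embP (Fin.cast hcard i) := by
      intro a b hab
      apply embP.strictMono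
      rw [Fin.lt_def] at hab ⊢
      simpa using hab
    have := Finset.orderEmbOfFin_unique (rfl : (J.image π).card = (J.image π).card) hmem hmono
    intro i
    rw [Finset.coe_orderIsoOfFin_apply, ← this]
  have hτ' : ∀ a : Fin J.card, π⁻¹ (embP a) = embJ (τ⁻¹ a) := by
    intro a
    have h1 := hτ (τ⁻¹ a)
    rw [(show τ (τ⁻¹ a) = a from τ.apply_symm_apply a), Finset.coe_orderIsoOfFin_apply,
      Finset.coe_orderIsoOfFin_apply] at h1
    rw [hembP, h1, (show ∀ x, π⁻¹ (π x) = x from fun x => π.symm_apply_apply x), hembJ]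
  unfold subPfaff
  have e1 : (Matrix.of fun a b : Fin (J.image π).card =>
      (Matrix.of fun a b => z (π⁻¹ a) (π⁻¹ b))
        (((J.image π).orderIsoOfFin rfl) a : Fin n) (((J.image π).orderIsoOfFin rfl) b : Fin n)) =
      (Matrix.of fun a b : Fin (J.image π).card =>
        (Matrix.of fun a b : Fin J.card => z (embJ (τ⁻¹ a)) (embJ (τ⁻¹ b)))
          (Fin.cast hcard a) (Fin.cast hcard b)) := by
    ext a b
    simp only [Matrix.of_apply]
    rw [hEnum a, hEnum b, hτ', hτ']
  rw [e1, pfaffian_cast hcard]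
  have e2 : (Matrix.of fun a b : Fin J.card =>
      z ((J.orderIsoOfFin rfl) a : Fin n) ((J.orderIsoOfFin rfl) b : Fin n)) =
      (Matrix.of fun a b : Fin J.card => z (embJ a) (embJ b)) := by
    ext a b
    simp only [Matrix.of_apply]
    rw [Finset.coe_orderIsoOfFin_apply, Finset.coe_orderIsoOfFin_apply, hembJ]
  rw [e2]
  unfold pfaffian
  rw [dif_pos hJ, dif_pos hJ]
  have pf : 2 * (J.card / 2) = J.card := by obtain ⟨m, hm⟩ := hJ; omega
  have key := pfaffianAux_reindex (R := R) J.card pf pf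
    (Matrix.of fun a b : Fin J.card => z (embJ a) (embJ b))
    (fun i j => by simp only [Matrix.of_apply]; exact hz' _ _) τ⁻¹
  rw [Equiv.Perm.sign_inv] at key
  exact key
end
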